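/- arXiv:0810.0239 — 7 statements merged into one kernel-verified Lean document; each statement's English description precedes it below -/
import Mathlib

section
/- Let π = (π_0, π_1, ..., π_Λ), where each π_n = (π_n(0), π_n(1)) is a row vector in ℝ², be defined by π_Λ = w_Λ / Z_Λ and π_n = (w_Λ α_{Λ-1} α_{Λ-2} ⋯ α_n) / Z_Λ for 0 ≤ n < Λ, with normalization constant Z_Λ = w_Λ·(1,1)ᵀ + Σ_{j=0}^{Λ-1} w_Λ α_{Λ-1} ⋯ α_j·(1,1)ᵀ. Then all entries of π are nonnegative, Σ_{n=0}^{Λ} (π_n(0) + π_n(1)) = 1, and π satisfies the stationarity equations: 0 = π_0 R_0 + π_1 D_1; 0 = π_{n-1} U + π_n R_n + π_{n+1} D_{n+1} for all 0 < n < Λ; and 0 = π_{Λ-1} U + π_Λ R_Λ. -/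
open Matrix Finset

noncomputable section

/-- The matrix `U` encoding protein production (only when the promoter is on). -/
def Umat (μ : ℝ) : Matrix (Fin 2) (Fin 2) ℝ := !![0, 0; 0, μ]

/-- The matrix `D_n = ν(n)·I` encoding degradation. -/
def Dmat (ν : ℕ → ℝ) (n : ℕ) : Matrix (Fin 2) (Fin 2) ℝ := !![ν n, 0; 0, ν n]

/-- The matrix `R_n` (with boundary versions at `n = 0` and `n = Λ`). -/
def Rmat (μ : ℝ) (ν g κ : ℕ → ℝ) (Λ n : ℕ) : Matrix (Fin 2) (Fin 2) ℝ :=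
  if n = 0 then !![-(g 0), g 0; κ 0, -(κ 0 + μ)]
  else if n = Λ then !![-(g Λ + ν Λ), g Λ; κ Λ, -(κ Λ + ν Λ)]
  else !![-(g n + ν n), g n; κ n, -(κ n + ν n + μ)]

/-- The transfer matrix `α_n`. -/
def alphaMat (μ : ℝ) (ν g κ : ℕ → ℝ) (n : ℕ) : Matrix (Fin 2) (Fin 2) ℝ :=
  if n = 0 then
    (ν 1 / μ) • !![(κ 0 + μ) / g 0, 1; κ 0 / g 0, 1]
  else
    (ν (n + 1) / μ) • !![(κ n + μ) / (g n + ν n), 1; κ n / (g n + ν n), 1]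

/-- The row vector `w_Λ = (κ(Λ), g(Λ)+ν(Λ))`. -/
def wvec (ν g κ : ℕ → ℝ) (Λ : ℕ) : Fin 2 → ℝ := ![κ Λ, g Λ + ν Λ]

/-- `pv k = w_Λ α_{Λ-1} α_{Λ-2} ⋯ α_{Λ-k}`, so that `pv (Λ - n) = w_Λ α_{Λ-1} ⋯ α_n`. -/
def pv (μ : ℝ) (ν g κ : ℕ → ℝ) (Λ : ℕ) : ℕ → (Fin 2 → ℝ)
  | 0 => wvec ν g κ Λ
  | k + 1 => (pv μ ν g κ Λ k) ᵥ* alphaMat μ ν g κ (Λ - 1 - k)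

/-- The normalization constant `Z_Λ`. -/
def Zconst (μ : ℝ) (ν g κ : ℕ → ℝ) (Λ : ℕ) : ℝ :=
  ∑ k ∈ Finset.range (Λ + 1), (pv μ ν g κ Λ k 0 + pv μ ν g κ Λ k 1)

/-- The candidate stationary distribution `π_n = w_Λ α_{Λ-1} ⋯ α_n / Z_Λ`
(`π_Λ = w_Λ / Z_Λ`). -/
def piDist (μ : ℝ) (ν g κ : ℕ → ℝ) (Λ n : ℕ) : Fin 2 → ℝ :=
  (Zconst μ ν g κ Λ)⁻¹ • pv μ ν g κ Λ (Λ - n)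

/-! ### Auxiliary lemmas -/

lemma vecMul_two (v : Fin 2 → ℝ) (M : Matrix (Fin 2) (Fin 2) ℝ) (j : Fin 2) :
    (v ᵥ* M) j = v 0 * M 0 j + v 1 * M 1 j := by
  simp [Matrix.vecMul, dotProduct, Fin.sum_univ_two]

lemma pv_zero (μ : ℝ) (ν g κ : ℕ → ℝ) (Λ : ℕ) :
    pv μ ν g κ Λ 0 = wvec ν g κ Λ := rfl

lemma pv_succ (μ : ℝ) (ν g κ : ℕ → ℝ) (Λ k : ℕ) :
    pv μ ν g κ Λ (k + 1) = pv μ ν g κ Λ k ᵥ* alphaMat μ ν g κ (Λ - 1 - k) := rfl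

lemma vecMul_Dmat (ν : ℕ → ℝ) (n : ℕ) (v : Fin 2 → ℝ) :
    v ᵥ* Dmat ν n = ν n • v := by
  funext j
  fin_cases j <;> simp [vecMul_two, Dmat, Matrix.vecHead, Matrix.vecTail] <;> ring

/-- The second column of every transfer matrix is constant `ν(n+1)/μ`. -/
lemma alpha_col (μ : ℝ) (ν g κ : ℕ → ℝ) (m : ℕ) (i : Fin 2) :
    alphaMat μ ν g κ m i 1 = ν (m + 1) / μ := by
  by_cases h : m = 0 <;> fin_cases i <;> simp [alphaMat, h]

/-- Bottom identity: `α₀ R₀ = -ν(1) • 1` acting on row vectors. -/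
lemma key_bot (μ : ℝ) (hμ : μ ≠ 0) (ν g κ : ℕ → ℝ) (Λ : ℕ) (hg0 : g 0 ≠ 0)
    (q : Fin 2 → ℝ) :
    (q ᵥ* alphaMat μ ν g κ 0) ᵥ* Rmat μ ν g κ Λ 0 + ν 1 • q = 0 := by
  funext j
  fin_cases j <;>
    simp [vecMul_two, alphaMat, Rmat, Matrix.vecHead, Matrix.vecTail] <;>
    field_simp <;> ring

/-- Abstract middle identity. -/
lemma core_mid (μ gn νn κn ν' : ℝ) (hμ : μ ≠ 0) (hgn : gn + νn ≠ 0)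
    (q : Fin 2 → ℝ) (A B R : Matrix (Fin 2) (Fin 2) ℝ)
    (hA : A = (ν' / μ) • !![(κn + μ) / (gn + νn), 1; κn / (gn + νn), 1])
    (hB0 : B 0 1 = νn / μ) (hB1 : B 1 1 = νn / μ)
    (hR : R = !![-(gn + νn), gn; κn, -(κn + νn + μ)]) :
    ((q ᵥ* A) ᵥ* B) ᵥ* Umat μ + (q ᵥ* A) ᵥ* R + ν' • q = 0 := by
  subst hA hR
  funext j
  fin_cases j <;>
    simp [-Matrix.vecMul_vecMul, vecMul_two, Umat, hB0, hB1, Matrix.vecHead, Matrix.vecTail] <;>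
    (try field_simp) <;> (try ring)

/-- Abstract top identity. -/
lemma core_top (μ νΛ gΛ κΛ : ℝ) (hμ : μ ≠ 0) (w : Fin 2 → ℝ)
    (hw : w = ![κΛ, gΛ + νΛ]) (B R : Matrix (Fin 2) (Fin 2) ℝ)
    (hB0 : B 0 1 = νΛ / μ) (hB1 : B 1 1 = νΛ / μ)
    (hR : R = !![-(gΛ + νΛ), gΛ; κΛ, -(κΛ + νΛ)]) :
    (w ᵥ* B) ᵥ* Umat μ + w ᵥ* R = 0 := by
  subst hw hR
  funext j
  fin_cases j <;>
    simp [-Matrix.vecMul_vecMul, vecMul_two, Umat, hB0, hB1, Matrix.vecHead, Matrix.vecTail] <;>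
    (try field_simp) <;> (try ring)

/-- Entrywise nonnegativity of the transfer matrices. -/
lemma alpha_nonneg (Λ : ℕ) (μ : ℝ) (hμ : 0 < μ) (ν g κ : ℕ → ℝ)
    (hν : ∀ n, 1 ≤ n → n ≤ Λ → 0 < ν n)
    (hg : ∀ n ≤ Λ, 0 < g n) (hκ : ∀ n ≤ Λ, 0 ≤ κ n)
    (m : ℕ) (hm : m + 1 ≤ Λ) (i j : Fin 2) :
    0 ≤ alphaMat μ ν g κ m i j := by
  have hν' : 0 < ν (m + 1) := hν _ (by omega) hm
  by_cases hm0 : m = 0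
  · subst hm0
    have hκ0 : 0 ≤ κ 0 := hκ 0 (by omega)
    have hg0 : 0 < g 0 := hg 0 (by omega)
    fin_cases i <;> fin_cases j <;>
      simp [alphaMat, Matrix.vecHead, Matrix.vecTail] <;> positivity
  · have hκm : 0 ≤ κ m := hκ m (by omega)
    have hgm : 0 < g m := hg m (by omega)
    have hνm : 0 < ν m := hν m (by omega) (by omega)
    rw [alphaMat, if_neg hm0]
    fin_cases i <;> fin_cases j <;>
      simp [Matrix.vecHead, Matrix.vecTail] <;> positivity

lemma pv_nonneg (Λ : ℕ) (hΛ : 1 ≤ Λ) (μ : ℝ) (hμ : 0 < μ) (ν g κ : ℕ → ℝ)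
    (hν : ∀ n, 1 ≤ n → n ≤ Λ → 0 < ν n)
    (hg : ∀ n ≤ Λ, 0 < g n) (hκ : ∀ n ≤ Λ, 0 ≤ κ n) :
    ∀ k ≤ Λ, ∀ y : Fin 2, 0 ≤ pv μ ν g κ Λ k y := by
  intro k
  induction k with
  | zero =>
    intro _ y
    fin_cases y
    · simpa [pv_zero, wvec] using hκ Λ le_rfl
    · have h1 := hg Λ le_rfl
      have h2 := hν Λ hΛ le_rfl
      simp only [pv_zero, wvec]
      simp [Matrix.vecHead, Matrix.vecTail]
      linarith
  | succ k ih =>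
    intro hk y
    have hm : (Λ - 1 - k) + 1 ≤ Λ := by omega
    have hα := alpha_nonneg Λ μ hμ ν g κ hν hg hκ (Λ - 1 - k) hm
    rw [pv_succ, vecMul_two]
    exact add_nonneg (mul_nonneg (ih (by omega) 0) (hα 0 y))
      (mul_nonneg (ih (by omega) 1) (hα 1 y))

/-! ### Main theorem -/

/-- Theorem `Steady`: the vector `π` defined from the transfer
matrices is a probability vector satisfying the stationarity equations. -/
theorem steady_state_transfer_matrix
    (Λ : ℕ) (hΛ : 1 ≤ Λ) (μ : ℝ) (hμ : 0 < μ) (ν g κ : ℕ → ℝ)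
    (hν0 : ν 0 = 0) (hν : ∀ n, 1 ≤ n → n ≤ Λ → 0 < ν n)
    (hg : ∀ n ≤ Λ, 0 < g n) (hκ : ∀ n ≤ Λ, 0 ≤ κ n) :
    (∀ n ≤ Λ, ∀ y : Fin 2, 0 ≤ piDist μ ν g κ Λ n y) ∧
    (∑ n ∈ Finset.range (Λ + 1),
        (piDist μ ν g κ Λ n 0 + piDist μ ν g κ Λ n 1) = 1) ∧
    (piDist μ ν g κ Λ 0 ᵥ* Rmat μ ν g κ Λ 0
        + piDist μ ν g κ Λ 1 ᵥ* Dmat ν 1 = 0) ∧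
    (∀ n, 0 < n → n < Λ →
      piDist μ ν g κ Λ (n - 1) ᵥ* Umat μ
        + piDist μ ν g κ Λ n ᵥ* Rmat μ ν g κ Λ n
        + piDist μ ν g κ Λ (n + 1) ᵥ* Dmat ν (n + 1) = 0) ∧
    (piDist μ ν g κ Λ (Λ - 1) ᵥ* Umat μ
        + piDist μ ν g κ Λ Λ ᵥ* Rmat μ ν g κ Λ Λ = 0) := by
  have hpv := pv_nonneg Λ hΛ μ hμ ν g κ hν hg hκ
  have hZ : 0 < Zconst μ ν g κ Λ := by
    rw [Zconst]
    refine Finset.sum_pos' (fun k hk => ?_) ⟨0, by simp, ?_⟩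
    · have hk' : k ≤ Λ := by simpa using Nat.lt_succ_iff.mp (Finset.mem_range.mp hk)
      exact add_nonneg (hpv k hk' 0) (hpv k hk' 1)
    · have h1 := hg Λ le_rfl
      have h2 := hν Λ hΛ le_rfl
      have h3 := hκ Λ le_rfl
      simp only [pv_zero, wvec]
      simp [Matrix.vecHead, Matrix.vecTail]
      linarith
  refine ⟨?_, ?_, ?_, ?_, ?_⟩
  · -- nonnegativity
    intro n hn y
    have : piDist μ ν g κ Λ n y = (Zconst μ ν g κ Λ)⁻¹ * pv μ ν g κ Λ (Λ - n) y := rfl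
    rw [this]
    exact mul_nonneg (inv_nonneg.mpr hZ.le) (hpv (Λ - n) (by omega) y)
  · -- sums to one
    have e : ∀ n, piDist μ ν g κ Λ n 0 + piDist μ ν g κ Λ n 1
        = (Zconst μ ν g κ Λ)⁻¹ * (pv μ ν g κ Λ (Λ - n) 0 + pv μ ν g κ Λ (Λ - n) 1) := by
      intro n
      simp [piDist, mul_add]
    simp only [e, ← Finset.mul_sum]
    have hr : ∑ n ∈ Finset.range (Λ + 1),
        (pv μ ν g κ Λ (Λ - n) 0 + pv μ ν g κ Λ (Λ - n) 1) = Zconst μ ν g κ Λ := by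
      rw [Zconst]
      have := Finset.sum_range_reflect
        (fun k => pv μ ν g κ Λ k 0 + pv μ ν g κ Λ k 1) (Λ + 1)
      simpa using this
    rw [hr, inv_mul_cancel₀ hZ.ne']
  · -- bottom equation
    have e1 : pv μ ν g κ Λ (Λ - 0) = pv μ ν g κ Λ (Λ - 1) ᵥ* alphaMat μ ν g κ 0 := by
      rw [show Λ - 0 = (Λ - 1) + 1 from by omega, pv_succ,
        show Λ - 1 - (Λ - 1) = 0 from by omega]
    simp only [piDist, e1, Matrix.smul_vecMul, vecMul_Dmat]
    rw [← smul_add, key_bot μ hμ.ne' ν g κ Λ (hg 0 (by omega)).ne', smul_zero]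
  · -- middle equations
    intro n hn0 hnΛ
    have e1 : pv μ ν g κ Λ (Λ - n)
        = pv μ ν g κ Λ (Λ - (n + 1)) ᵥ* alphaMat μ ν g κ n := by
      rw [show Λ - n = (Λ - (n + 1)) + 1 from by omega, pv_succ,
        show Λ - 1 - (Λ - (n + 1)) = n from by omega]
    have e2 : pv μ ν g κ Λ (Λ - (n - 1))
        = (pv μ ν g κ Λ (Λ - (n + 1)) ᵥ* alphaMat μ ν g κ n)
            ᵥ* alphaMat μ ν g κ (n - 1) := by
      rw [show Λ - (n - 1) = (Λ - n) + 1 from by omega, pv_succ,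
        show Λ - 1 - (Λ - n) = n - 1 from by omega, e1]
    have hdn : g n + ν n ≠ 0 := by
      have := hg n (by omega)
      have := hν n (by omega) (by omega)
      positivity
    have hkey : ((pv μ ν g κ Λ (Λ - (n + 1)) ᵥ* alphaMat μ ν g κ n)
          ᵥ* alphaMat μ ν g κ (n - 1)) ᵥ* Umat μ
        + (pv μ ν g κ Λ (Λ - (n + 1)) ᵥ* alphaMat μ ν g κ n) ᵥ* Rmat μ ν g κ Λ n
        + ν (n + 1) • pv μ ν g κ Λ (Λ - (n + 1)) = 0 := by
      refine core_mid μ (g n) (ν n) (κ n) (ν (n + 1)) hμ.ne' hdn _ _ _ _ ?_ ?_ ?_ ?_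
      · rw [alphaMat, if_neg hn0.ne']
      · rw [alpha_col, show n - 1 + 1 = n from by omega]
      · rw [alpha_col, show n - 1 + 1 = n from by omega]
      · rw [Rmat, if_neg hn0.ne', if_neg hnΛ.ne]
    simp only [piDist, e1, e2, Matrix.smul_vecMul, vecMul_Dmat]
    rw [← smul_add, ← smul_add, hkey, smul_zero]
  · -- top equation
    have e1 : pv μ ν g κ Λ (Λ - (Λ - 1))
        = wvec ν g κ Λ ᵥ* alphaMat μ ν g κ (Λ - 1) := by
      rw [show Λ - (Λ - 1) = 0 + 1 from by omega, pv_succ,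
        show Λ - 1 - 0 = Λ - 1 from by omega, pv_zero]
    have e2 : pv μ ν g κ Λ (Λ - Λ) = wvec ν g κ Λ := by
      rw [show Λ - Λ = 0 from by omega, pv_zero]
    have hkey : (wvec ν g κ Λ ᵥ* alphaMat μ ν g κ (Λ - 1)) ᵥ* Umat μ
        + wvec ν g κ Λ ᵥ* Rmat μ ν g κ Λ Λ = 0 := by
      refine core_top μ (ν Λ) (g Λ) (κ Λ) hμ.ne' _ rfl _ _ ?_ ?_ ?_
      · rw [alpha_col, show Λ - 1 + 1 = Λ from by omega]
      · rw [alpha_col, show Λ - 1 + 1 = Λ from by omega]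
      · rw [Rmat, if_neg (by omega), if_pos rfl]
    simp only [piDist, e1, e2, Matrix.smul_vecMul]
    rw [← smul_add, hkey, smul_zero]

end
end

section
/- Let ν > 0, μ_0, μ_1 ≥ 0, and let g, κ : ℕ → ℝ be nonnegative. Let (π_n(s))_{n ∈ ℕ, s ∈ {0,1}} be nonnegative reals with Σ_n (π_n(0) + π_n(1)) = 1, Σ_n n·(π_n(0)+π_n(1)) < ∞, Σ_n g(n)π_n(0) < ∞ and Σ_n κ(n)π_n(1) < ∞, satisfying the stationary master equations: for each s ∈ {0,1} and n ≥ 0, 0 = μ_s(π_{n-1}(s) - π_n(s)) + ν(n+1)π_{n+1}(s) - νn·π_n(s) + (-1)^s(κ(n)π_n(1) - g(n)π_n(0)), with the convention π_{-1}(s) = 0. Then the stationary mean satisfies ν · Σ_n n(π_n(0) + π_n(1)) = μ_1 · Σ_n π_n(1) + μ_0 · Σ_n π_n(0); i.e., E[N(∞)] = (μ_1/ν)·P(Y(∞)=1) + (μ_0/ν)·P(Y(∞)=0). -/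
noncomputable section

/-- for a stationary solution of the master equation of the
self-regulated gene with linear degradation `ν n`, the stationary mean satisfies
`ν·E[N(∞)] = μ₁·P(Y(∞)=1) + μ₀·P(Y(∞)=0)`. -/
theorem stationary_mean_relation
    (ν : ℝ) (hν : 0 < ν) (μ : Fin 2 → ℝ) (hμ : ∀ s, 0 ≤ μ s)
    (g κ : ℕ → ℝ) (hg : ∀ n, 0 ≤ g n) (hκ : ∀ n, 0 ≤ κ n)
    (π : ℕ → Fin 2 → ℝ) (hπ : ∀ n s, 0 ≤ π n s)
    (hsum : (∑' n : ℕ, (π n 0 + π n 1)) = 1)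
    (hmom : Summable (fun n : ℕ => (n : ℝ) * (π n 0 + π n 1)))
    (hgsum : Summable (fun n : ℕ => g n * π n 0))
    (hκsum : Summable (fun n : ℕ => κ n * π n 1))
    (hmaster : ∀ s : Fin 2, ∀ n : ℕ,
      0 = μ s * ((if n = 0 then 0 else π (n - 1) s) - π n s)
        + ν * (n + 1) * π (n + 1) s - ν * n * π n s
        + (-1 : ℝ) ^ (s : ℕ) * (κ n * π n 1 - g n * π n 0)) :
    ν * (∑' n : ℕ, (n : ℝ) * (π n 0 + π n 1))
      = μ 1 * (∑' n : ℕ, π n 1) + μ 0 * (∑' n : ℕ, π n 0) := by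
  have hS : Summable (fun n : ℕ => π n 0 + π n 1) := by
    by_contra h
    rw [tsum_eq_zero_of_not_summable h] at hsum
    norm_num at hsum
  have hS0 : Summable (fun n : ℕ => π n 0) :=
    hS.of_nonneg_of_le (fun n => hπ n 0) (fun n => le_add_of_nonneg_right (hπ n 1))
  have hS1 : Summable (fun n : ℕ => π n 1) :=
    hS.of_nonneg_of_le (fun n => hπ n 1) (fun n => le_add_of_nonneg_left (hπ n 0))
  -- pointwise flux balance, by induction on n
  have key : ∀ n : ℕ, ν * ((n : ℝ) + 1) * (π (n + 1) 0 + π (n + 1) 1)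
      = μ 0 * π n 0 + μ 1 * π n 1 := by
    intro n
    induction n with
    | zero =>
      have h0 := hmaster 0 0
      have h1 := hmaster 1 0
      norm_num at h0 h1 ⊢
      linarith
    | succ m ih =>
      have h0 := hmaster 0 (m + 1)
      have h1 := hmaster 1 (m + 1)
      simp only [Nat.add_sub_cancel, Nat.succ_ne_zero, if_false] at h0 h1
      push_cast at h0 h1 ih ⊢
      norm_num at h0 h1
      linarith
  -- summability of shifted moment series
  have hmom' : Summable (fun n : ℕ => ((n + 1 : ℕ) : ℝ) * (π (n + 1) 0 + π (n + 1) 1)) :=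
    (summable_nat_add_iff 1).2 hmom
  have hstep : (fun n : ℕ => ν * (((n + 1 : ℕ) : ℝ) * (π (n + 1) 0 + π (n + 1) 1)))
      = fun n : ℕ => μ 0 * π n 0 + μ 1 * π n 1 := by
    funext n
    have := key n
    push_cast
    linarith
  calc ν * (∑' n : ℕ, (n : ℝ) * (π n 0 + π n 1))
      = ν * ((0 : ℝ) * (π 0 0 + π 0 1)
          + ∑' n : ℕ, ((n + 1 : ℕ) : ℝ) * (π (n + 1) 0 + π (n + 1) 1)) := by
        rw [Summable.tsum_eq_zero_add hmom]
        norm_num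
    _ = ∑' n : ℕ, ν * (((n + 1 : ℕ) : ℝ) * (π (n + 1) 0 + π (n + 1) 1)) := by
        rw [tsum_mul_left]; ring
    _ = ∑' n : ℕ, (μ 0 * π n 0 + μ 1 * π n 1) := by rw [hstep]
    _ = μ 0 * (∑' n : ℕ, π n 0) + μ 1 * (∑' n : ℕ, π n 1) := by
        rw [Summable.tsum_add (hS0.mul_left _) (hS1.mul_left _), tsum_mul_left, tsum_mul_left]
    _ = μ 1 * (∑' n : ℕ, π n 1) + μ 0 * (∑' n : ℕ, π n 0) := by ring

end
end

section
/- Let ν, g, κ > 0 and μ_0, μ_1 ≥ 0 with constant switching rates g(n) ≡ g, κ(n) ≡ κ. Let (π_n(s))_{n ∈ ℕ, s ∈ {0,1}} be a nonnegative stationary solution of the master equations (with linear degradation νn, convention π_{-1}(s)=0) satisfying Σ_n (π_n(0)+π_n(1)) = 1 and Σ_n n²(π_n(0)+π_n(1)) < ∞. Set G = Σ_n π_n(1), E = Σ_n n(π_n(0)+π_n(1)), and Var = Σ_n n²(π_n(0)+π_n(1)) - E². Then G = g/(g+κ), E = (μ_1/ν)G + (μ_0/ν)(1-G), and Var = (μ_1/ν)G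 + (μ_0/ν)(1-G) + (τ_2/(τ_1+τ_2))·((μ_1-μ_0)²/ν²)·G(1-G), where τ_1 = 1/ν and τ_2 = 1/(g+κ). -/
noncomputable section

lemma aux_shift_summable (f : ℕ → ℝ) (hf : Summable f) :
    Summable (fun n => if n = 0 then (0:ℝ) else f (n - 1)) := by
  apply (summable_nat_add_iff 1).mp
  simpa using hf

lemma aux_shift_tsum (f : ℕ → ℝ) (hf : Summable f) :
    ∑' n : ℕ, (if n = 0 then (0:ℝ) else f (n - 1)) = ∑' n : ℕ, f n := by
  rw [Summable.tsum_eq_zero_add (aux_shift_summable f hf)]; simp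

lemma aux_zero_shift (f : ℕ → ℝ) (hf : Summable f) (h0 : f 0 = 0) :
    ∑' n : ℕ, f (n + 1) = ∑' n : ℕ, f n := by
  rw [Summable.tsum_eq_zero_add hf, h0, zero_add]

set_option maxHeartbeats 1000000 in
/-- Example `Constant`: for the self-regulated gene with constant
switching rates `g, κ` and linear degradation, the stationary distribution has
`G = g/(g+κ)`, mean `E = (μ₁/ν)G + (μ₀/ν)(1-G)`, and variance
`Var = (μ₁/ν)G + (μ₀/ν)(1-G) + (τ₂/(τ₁+τ₂))·((μ₁-μ₀)²/ν²)·G(1-G)`. -/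
theorem stationary_mean_variance_constant_rates
    (ν g κ : ℝ) (hν : 0 < ν) (hg : 0 < g) (hκ : 0 < κ)
    (μ : Fin 2 → ℝ) (hμ : ∀ s, 0 ≤ μ s)
    (π : ℕ → Fin 2 → ℝ) (hπ : ∀ n s, 0 ≤ π n s)
    (hsum : (∑' n : ℕ, (π n 0 + π n 1)) = 1)
    (hmom2 : Summable (fun n : ℕ => (n : ℝ) ^ 2 * (π n 0 + π n 1)))
    (hmaster : ∀ s : Fin 2, ∀ n : ℕ,
      0 = μ s * ((if n = 0 then 0 else π (n - 1) s) - π n s)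
        + ν * (n + 1) * π (n + 1) s - ν * n * π n s
        + (-1 : ℝ) ^ (s : ℕ) * (κ * π n 1 - g * π n 0)) :
    (∑' n : ℕ, π n 1) = g / (g + κ) ∧
    (∑' n : ℕ, (n : ℝ) * (π n 0 + π n 1))
      = (μ 1 / ν) * (g / (g + κ)) + (μ 0 / ν) * (1 - g / (g + κ)) ∧
    (∑' n : ℕ, (n : ℝ) ^ 2 * (π n 0 + π n 1))
        - (∑' n : ℕ, (n : ℝ) * (π n 0 + π n 1)) ^ 2
      = (μ 1 / ν) * (g / (g + κ)) + (μ 0 / ν) * (1 - g / (g + κ))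
        + ((1 / (g + κ)) / (1 / ν + 1 / (g + κ)))
          * ((μ 1 - μ 0) ^ 2 / ν ^ 2)
          * ((g / (g + κ)) * (1 - g / (g + κ))) := by
  -- basic summability facts
  have hp : Summable (fun n : ℕ => π n 0 + π n 1) := by
    by_contra h
    rw [tsum_eq_zero_of_not_summable h] at hsum
    norm_num at hsum
  have hle : ∀ (n : ℕ) (s : Fin 2), π n s ≤ π n 0 + π n 1 := by
    intro n s
    fin_cases s
    · exact le_add_of_nonneg_right (hπ n 1)
    · exact le_add_of_nonneg_left (hπ n 0)
  have hS0 : ∀ s : Fin 2, Summable (fun n => π n s) :=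
    fun s => Summable.of_nonneg_of_le (fun n => hπ n s) (fun n => hle n s) hp
  have hS2 : ∀ s : Fin 2, Summable (fun n : ℕ => (n:ℝ)^2 * π n s) := by
    intro s
    exact Summable.of_nonneg_of_le
      (fun n => mul_nonneg (sq_nonneg _) (hπ n s))
      (fun n => mul_le_mul_of_nonneg_left (hle n s) (sq_nonneg _)) hmom2
  have hcast : ∀ n : ℕ, (n:ℝ) ≤ (n:ℝ)^2 := by
    intro n
    exact_mod_cast Nat.le_self_pow two_ne_zero n
  have hS1 : ∀ s : Fin 2, Summable (fun n : ℕ => (n:ℝ) * π n s) := by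
    intro s
    exact Summable.of_nonneg_of_le
      (fun n => mul_nonneg n.cast_nonneg (hπ n s))
      (fun n => mul_le_mul_of_nonneg_right (hcast n) (hπ n s)) (hS2 s)
  set G0 := ∑' n : ℕ, π n 0 with hG0def
  set G1 := ∑' n : ℕ, π n 1 with hG1def
  set M0 := ∑' n : ℕ, (n:ℝ) * π n 0 with hM0def
  set M1 := ∑' n : ℕ, (n:ℝ) * π n 1 with hM1def
  -- split the given sums
  have hGsum : G0 + G1 = 1 := by
    rw [hG0def, hG1def, ← Summable.tsum_add (hS0 0) (hS0 1)]
    exact hsum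
  have hE : ∑' n : ℕ, (n:ℝ) * (π n 0 + π n 1) = M0 + M1 := by
    rw [hM0def, hM1def, ← Summable.tsum_add (hS1 0) (hS1 1)]
    exact tsum_congr fun n => by ring
  have hQ : ∑' n : ℕ, (n:ℝ)^2 * (π n 0 + π n 1)
      = (∑' n : ℕ, (n:ℝ)^2 * π n 0) + ∑' n : ℕ, (n:ℝ)^2 * π n 1 := by
    rw [← Summable.tsum_add (hS2 0) (hS2 1)]
    exact tsum_congr fun n => by ring
  -- switching balance (zeroth moment, from the s = 0 master equation)
  have hνshift : Summable (fun n : ℕ => ν * ((n:ℝ)+1) * π (n+1) 0) := by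
    have h1 : Summable (fun n : ℕ => ν * ((n:ℝ) * π n 0)) := (hS1 0).mul_left ν
    have h2 := (summable_nat_add_iff 1).2 h1
    apply h2.congr
    intro n
    push_cast
    ring
  have hswtsum : ∑' n : ℕ, ν * ((n:ℝ)+1) * π (n+1) 0 = ∑' n : ℕ, ν * ((n:ℝ) * π n 0) := by
    have h1 : Summable (fun n : ℕ => ν * ((n:ℝ) * π n 0)) := (hS1 0).mul_left ν
    have := aux_zero_shift (fun n : ℕ => ν * ((n:ℝ) * π n 0)) h1 (by simp)
    rw [← this]
    apply tsum_congr
    intro n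
    push_cast
    ring
  have hsw : κ * G1 - g * G0 = 0 := by
    have hpt : ∀ n : ℕ, κ * π n 1 - g * π n 0
        = μ 0 * (π n 0 - (if n = 0 then (0:ℝ) else π (n-1) 0))
          + (ν * ((n:ℝ) * π n 0) - ν * ((n:ℝ)+1) * π (n+1) 0) := by
      intro n
      have h := hmaster 0 n
      simp only [Fin.val_zero, pow_zero, one_mul] at h
      push_cast at h
      linarith
    have hshs := aux_shift_summable (fun n => π n 0) (hS0 0)
    have s1 : Summable (fun n : ℕ =>
        μ 0 * (π n 0 - (if n = 0 then (0:ℝ) else π (n-1) 0))) :=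
      ((hS0 0).sub hshs).mul_left (μ 0)
    have s2 : Summable (fun n : ℕ =>
        ν * ((n:ℝ) * π n 0) - ν * ((n:ℝ)+1) * π (n+1) 0) :=
      ((hS1 0).mul_left ν).sub hνshift
    calc κ * G1 - g * G0
        = ∑' n : ℕ, (κ * π n 1 - g * π n 0) := by
          rw [Summable.tsum_sub ((hS0 1).mul_left κ) ((hS0 0).mul_left g),
            tsum_mul_left, tsum_mul_left]
      _ = ∑' n : ℕ, (μ 0 * (π n 0 - (if n = 0 then (0:ℝ) else π (n-1) 0))
            + (ν * ((n:ℝ) * π n 0) - ν * ((n:ℝ)+1) * π (n+1) 0)) :=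
          tsum_congr hpt
      _ = 0 := by
          rw [Summable.tsum_add s1 s2, Summable.tsum_sub ((hS1 0).mul_left ν) hνshift,
            tsum_mul_left, Summable.tsum_sub (hS0 0) hshs,
            aux_shift_tsum (fun n => π n 0) (hS0 0), hswtsum, tsum_mul_left]
          ring
  -- first moment equations, for each s
  have hfm : ∀ s : Fin 2,
      μ s * (∑' n : ℕ, π n s) - ν * (∑' n : ℕ, (n:ℝ) * π n s)
        + (-1:ℝ)^(s:ℕ) * (κ * M1 - g * M0) = 0 := by
    intro s
    -- f1 n = n * shift
    have hf1s : Summable (fun n : ℕ =>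
        (n:ℝ) * (if n = 0 then (0:ℝ) else π (n-1) s)) := by
      apply (summable_nat_add_iff 1).mp
      have h1 : Summable (fun n : ℕ => (n:ℝ) * π n s + π n s) := (hS1 s).add (hS0 s)
      apply h1.congr
      intro n
      simp
      push_cast
      ring
    have hf1 : ∑' n : ℕ, (n:ℝ) * (if n = 0 then (0:ℝ) else π (n-1) s)
        = (∑' n : ℕ, (n:ℝ) * π n s) + ∑' n : ℕ, π n s := by
      rw [Summable.tsum_eq_zero_add hf1s]
      simp only [Nat.cast_zero, zero_mul, zero_add, Nat.add_sub_cancel,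
        Nat.succ_ne_zero, if_false]
      rw [← Summable.tsum_add (hS1 s) (hS0 s)]
      apply tsum_congr
      intro n
      push_cast
      ring
    -- r n = ν * (n-1) * n * π n s
    have hrbd : ∀ n : ℕ, 0 ≤ ν * (((n:ℝ)-1) * ((n:ℝ) * π n s)) ∧
        ν * (((n:ℝ)-1) * ((n:ℝ) * π n s)) ≤ ν * ((n:ℝ)^2 * π n s) := by
      intro n
      rcases Nat.eq_zero_or_pos n with h | h
      · subst h; simp
      · have h1 : (1:ℝ) ≤ (n:ℝ) := by exact_mod_cast h
        have h2 : (0:ℝ) ≤ (n:ℝ) * π n s := mul_nonneg n.cast_nonneg (hπ n s)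
        constructor
        · exact mul_nonneg hν.le (mul_nonneg (by linarith) h2)
        · apply mul_le_mul_of_nonneg_left _ hν.le
          nlinarith [hπ n s, h2]
    have hrs : Summable (fun n : ℕ => ν * (((n:ℝ)-1) * ((n:ℝ) * π n s))) :=
      Summable.of_nonneg_of_le (fun n => (hrbd n).1) (fun n => (hrbd n).2)
        ((hS2 s).mul_left ν)
    have hr : ∑' n : ℕ, ν * (((n:ℝ)-1) * ((n:ℝ) * π n s))
        = ν * (∑' n : ℕ, (n:ℝ)^2 * π n s) - ν * (∑' n : ℕ, (n:ℝ) * π n s) := by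
      rw [tsum_congr (fun n : ℕ => show ν * (((n:ℝ)-1) * ((n:ℝ) * π n s))
          = ν * ((n:ℝ)^2 * π n s) - ν * ((n:ℝ) * π n s) by ring),
        Summable.tsum_sub ((hS2 s).mul_left ν) ((hS1 s).mul_left ν),
        tsum_mul_left, tsum_mul_left]
    have hf2s : Summable (fun n : ℕ => (n:ℝ) * (ν * ((n:ℝ)+1) * π (n+1) s)) := by
      have h2 := (summable_nat_add_iff 1).2 hrs
      apply h2.congr
      intro n
      push_cast
      ring
    have hf2 : ∑' n : ℕ, (n:ℝ) * (ν * ((n:ℝ)+1) * π (n+1) s)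
        = ν * (∑' n : ℕ, (n:ℝ)^2 * π n s) - ν * (∑' n : ℕ, (n:ℝ) * π n s) := by
      rw [← hr, ← aux_zero_shift (fun n : ℕ => ν * (((n:ℝ)-1) * ((n:ℝ) * π n s)))
        hrs (by simp)]
      apply tsum_congr
      intro n
      push_cast
      ring
    have hpt : ∀ n : ℕ, (-1:ℝ)^(s:ℕ) * (κ * ((n:ℝ) * π n 1) - g * ((n:ℝ) * π n 0))
        = μ s * ((n:ℝ) * π n s - (n:ℝ) * (if n = 0 then (0:ℝ) else π (n-1) s))
          + (ν * ((n:ℝ)^2 * π n s) - (n:ℝ) * (ν * ((n:ℝ)+1) * π (n+1) s)) := by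
      intro n
      have h := hmaster s n
      push_cast at h
      linear_combination (-(n:ℝ)) * h
    have s1 : Summable (fun n : ℕ => μ s * ((n:ℝ) * π n s
        - (n:ℝ) * (if n = 0 then (0:ℝ) else π (n-1) s))) :=
      ((hS1 s).sub hf1s).mul_left (μ s)
    have s2 : Summable (fun n : ℕ => ν * ((n:ℝ)^2 * π n s)
        - (n:ℝ) * (ν * ((n:ℝ)+1) * π (n+1) s)) :=
      ((hS2 s).mul_left ν).sub hf2s
    have key : (-1:ℝ)^(s:ℕ) * (κ * M1 - g * M0)
        = μ s * ((∑' n : ℕ, (n:ℝ) * π n s)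
            - ((∑' n : ℕ, (n:ℝ) * π n s) + ∑' n : ℕ, π n s))
          + (ν * (∑' n : ℕ, (n:ℝ)^2 * π n s)
            - (ν * (∑' n : ℕ, (n:ℝ)^2 * π n s) - ν * (∑' n : ℕ, (n:ℝ) * π n s))) := by
      calc (-1:ℝ)^(s:ℕ) * (κ * M1 - g * M0)
          = ∑' n : ℕ, ((-1:ℝ)^(s:ℕ) * (κ * ((n:ℝ) * π n 1) - g * ((n:ℝ) * π n 0))) := by
            rw [tsum_mul_left, Summable.tsum_sub ((hS1 1).mul_left κ) ((hS1 0).mul_left g),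
              tsum_mul_left, tsum_mul_left]
        _ = ∑' n : ℕ, (μ s * ((n:ℝ) * π n s
              - (n:ℝ) * (if n = 0 then (0:ℝ) else π (n-1) s))
            + (ν * ((n:ℝ)^2 * π n s) - (n:ℝ) * (ν * ((n:ℝ)+1) * π (n+1) s))) :=
            tsum_congr hpt
        _ = _ := by
            rw [Summable.tsum_add s1 s2, tsum_mul_left, Summable.tsum_sub (hS1 s) hf1s, hf1,
              Summable.tsum_sub ((hS2 s).mul_left ν) hf2s, tsum_mul_left, hf2]
    linarith [key]
  -- flux relation and second moment
  have flux : ∀ n : ℕ, ν * ((n:ℝ)+1) * (π (n+1) 0 + π (n+1) 1)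
      = μ 0 * π n 0 + μ 1 * π n 1 := by
    intro n
    induction n with
    | zero =>
      have h0 := hmaster 0 0
      have h1 := hmaster 1 0
      simp only [Fin.val_zero, Fin.val_one, pow_zero, pow_one, one_mul,
        if_pos rfl] at h0 h1
      push_cast at h0 h1 ⊢
      linarith
    | succ n ih =>
      have h0 := hmaster 0 (n+1)
      have h1 := hmaster 1 (n+1)
      simp only [Fin.val_zero, Fin.val_one, pow_zero, pow_one, one_mul,
        Nat.succ_ne_zero, if_false, Nat.add_sub_cancel] at h0 h1
      push_cast at h0 h1 ⊢
      linarith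
  have hS2 : ν * (∑' n : ℕ, (n:ℝ)^2 * (π n 0 + π n 1))
      = (μ 0 * M0 + μ 1 * M1) + (μ 0 * G0 + μ 1 * G1) := by
    have hd : Summable (fun n : ℕ => ν * ((n:ℝ)^2 * (π n 0 + π n 1))) :=
      hmom2.mul_left ν
    have step1 : ν * (∑' n : ℕ, (n:ℝ)^2 * (π n 0 + π n 1))
        = ∑' n : ℕ, ν * ((n:ℝ)^2 * (π n 0 + π n 1)) := (tsum_mul_left).symm
    have step2 : ∑' n : ℕ, ν * ((n:ℝ)^2 * (π n 0 + π n 1))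
        = ∑' n : ℕ, (((n:ℝ)+1) * (μ 0 * π n 0 + μ 1 * π n 1)) := by
      rw [← aux_zero_shift (fun n : ℕ => ν * ((n:ℝ)^2 * (π n 0 + π n 1))) hd (by simp)]
      apply tsum_congr
      intro n
      have := flux n
      push_cast
      nlinarith [flux n]
    have sA : Summable (fun n : ℕ => μ 0 * ((n:ℝ) * π n 0)) := (hS1 0).mul_left _
    have sB : Summable (fun n : ℕ => μ 1 * ((n:ℝ) * π n 1)) := (hS1 1).mul_left _
    have sC : Summable (fun n : ℕ => μ 0 * π n 0) := (hS0 0).mul_left _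
    have sD : Summable (fun n : ℕ => μ 1 * π n 1) := (hS0 1).mul_left _
    have step3 : ∑' n : ℕ, (((n:ℝ)+1) * (μ 0 * π n 0 + μ 1 * π n 1))
        = (μ 0 * M0 + μ 1 * M1) + (μ 0 * G0 + μ 1 * G1) := by
      have : ∀ n : ℕ, ((n:ℝ)+1) * (μ 0 * π n 0 + μ 1 * π n 1)
          = (μ 0 * ((n:ℝ) * π n 0) + μ 1 * ((n:ℝ) * π n 1))
            + (μ 0 * π n 0 + μ 1 * π n 1) := fun n => by ring
      rw [tsum_congr this, Summable.tsum_add ((sA.add sB)) ((sC.add sD)),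
        Summable.tsum_add sA sB, Summable.tsum_add sC sD, tsum_mul_left, tsum_mul_left,
        tsum_mul_left, tsum_mul_left]
    rw [step1, step2, step3]
  -- now pure algebra
  have hgk : g + κ ≠ 0 := by positivity
  have hν' : ν ≠ 0 := hν.ne'
  have hνgk : ν + g + κ ≠ 0 := by positivity
  have e3 := hfm 0
  have e4 := hfm 1
  simp only [Fin.val_zero, Fin.val_one, pow_zero, pow_one, one_mul, neg_one_mul] at e3 e4
  rw [← hG0def, ← hM0def] at e3
  rw [← hG1def, ← hM1def] at e4
  have hG1v : G1 = g / (g + κ) := by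
    field_simp
    linear_combination hsw + g * hGsum
  have hG0v : G0 = κ / (g + κ) := by
    field_simp
    linear_combination -hsw + κ * hGsum
  constructor
  · exact hG1v
  have hG0p : G0 * (g + κ) = κ := by
    linear_combination -hsw + κ * hGsum
  have hG1p : G1 * (g + κ) = g := by
    linear_combination hsw + g * hGsum
  have hEsum : ν * (M0 + M1) = μ 0 * G0 + μ 1 * G1 := by linarith
  constructor
  · rw [hE]
    field_simp
    linear_combination (g + κ) * hEsum + μ 0 * hG0p + μ 1 * hG1p
  · rw [hE]
    have hM0v : ν * (ν + g + κ) * M0 = (ν + κ) * (μ 0 * G0) + κ * (μ 1 * G1) := by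
      linear_combination (-(ν + κ)) * e3 + (-κ) * e4
    have hM1v : ν * (ν + g + κ) * M1 = (ν + g) * (μ 1 * G1) + g * (μ 0 * G0) := by
      linear_combination (-g) * e3 + (-(ν + g)) * e4
    have hM0e : M0 = ((ν + κ) * (μ 0 * κ) + κ * (μ 1 * g)) / ((g + κ) * (ν * (ν + g + κ))) := by
      rw [eq_div_iff (by positivity)]
      linear_combination (g + κ) * hM0v + ((ν + κ) * μ 0) * hG0p + (κ * μ 1) * hG1p
    have hM1e : M1 = ((ν + g) * (μ 1 * g) + g * (μ 0 * κ)) / ((g + κ) * (ν * (ν + g + κ))) := by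
      rw [eq_div_iff (by positivity)]
      linear_combination (g + κ) * hM1v + (g * μ 0) * hG0p + ((ν + g) * μ 1) * hG1p
    have hS2goal : (∑' n : ℕ, (n:ℝ)^2 * (π n 0 + π n 1))
        = ((μ 0 * M0 + μ 1 * M1) + (μ 0 * G0 + μ 1 * G1)) / ν := by
      rw [eq_div_iff hν']
      linarith [hS2]
    rw [hS2goal, hG0v, hG1v, hM0e, hM1e]
    clear hS2goal hM0e hM1e hS2 hM0v hM1v hG0p hG1p hEsum e3 e4 hfm hsw hswtsum
    clear hQ hE hGsum hmom2 hmaster hsum hνshift hG0v hG1v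
    clear_value G0 G1 M0 M1
    clear hG0def hG1def hM0def hM1def hp hle hS0 hS1 hS2 hcast hπ hμ
    field_simp
    ring

end
end

section
/- Fix ν > 0 and μ_1 > 0, and set ρ = μ_1/ν. The squared coefficient of variation CV²(g, κ) = (g+κ)/(ρ g) + νκ/(g(g+ν+κ)), defined for g, κ > 0, is strictly decreasing as a function of g (for each fixed κ > 0) and strictly increasing as a function of κ (for each fixed g > 0). -/
noncomputable section

/-- the squared coefficient of variation
`CV²(g,κ) = (g+κ)/(ρg) + νκ/(g(g+ν+κ))`, with `ρ = μ₁/ν`, is strictly decreasing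
in `g` and strictly increasing in `κ` on `(0,∞)`. -/
theorem cv_monotonicity
    (ν μ₁ : ℝ) (hν : 0 < ν) (hμ₁ : 0 < μ₁) (ρ : ℝ) (hρ : ρ = μ₁ / ν) :
    (∀ κ : ℝ, 0 < κ →
      StrictAntiOn (fun g : ℝ => (g + κ) / (ρ * g) + ν * κ / (g * (g + ν + κ)))
        (Set.Ioi 0)) ∧
    (∀ g : ℝ, 0 < g →
      StrictMonoOn (fun κ : ℝ => (g + κ) / (ρ * g) + ν * κ / (g * (g + ν + κ)))
        (Set.Ioi 0)) := by
  have hρ0 : 0 < ρ := hρ ▸ div_pos hμ₁ hν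
  constructor
  · intro κ hκ a ha b hb hab
    simp only [Set.mem_Ioi] at ha hb
    have h1 : (b + κ) / (ρ * b) < (a + κ) / (ρ * a) := by
      rw [div_lt_div_iff₀ (by positivity) (by positivity)]
      nlinarith [mul_pos (mul_pos hρ0 hκ) (sub_pos.2 hab)]
    have h2 : ν * κ / (b * (b + ν + κ)) < ν * κ / (a * (a + ν + κ)) := by
      apply div_lt_div_of_pos_left (by positivity) (by positivity)
      nlinarith
    exact add_lt_add h1 h2
  · intro g hg a ha b hb hab
    simp only [Set.mem_Ioi] at ha hb
    have h1 : (g + a) / (ρ * g) < (g + b) / (ρ * g) := by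
      apply div_lt_div_of_pos_right ?_ (by positivity)
      linarith
    have h2 : ν * a / (g * (g + ν + a)) < ν * b / (g * (g + ν + b)) := by
      rw [div_lt_div_iff₀ (by positivity) (by positivity)]
      nlinarith [mul_pos (mul_pos hν hg) (mul_pos (sub_pos.2 hab) (add_pos hg hν))]
    exact add_lt_add h1 h2

end
end

section
/- Let μ, ν, κ, θ > 0 and let g : [0,∞) → ℝ be continuously differentiable, increasing, with g(0) > 0. For any initial condition consisting of a continuous nonnegative function E on [-θ, 0] and a value G(0) ∈ [0,1], there exists a unique solution (E(t), G(t)) on [0, +∞) of the delayed system dE/dt = μ G(t) - ν E(t), dG/dt = g(E(t-θ))(1-G(t)) - κ G(t). Moreover this solution satisfies 0 < E(t) ≤ max{E(0), μ/ν} for all t > 0 and 0 < G(t) < 1 for all t > 0. -/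
open Set

noncomputable section

namespace DelayAux
open intervalIntegral Real

/-! ### FTC helpers -/

lemma ftc {a : ℝ → ℝ} (ha : Continuous a) (t : ℝ) :
    HasDerivAt (fun u => ∫ s in (0:ℝ)..u, a s) (a t) t :=
  (ha.integral_hasStrictDerivAt 0 t).hasDerivAt

lemma ftc_cont {a : ℝ → ℝ} (ha : Continuous a) :
    Continuous (fun u => ∫ s in (0:ℝ)..u, a s) :=
  continuous_iff_continuousAt.2 fun t => (ftc ha t).continuousAt

/-! ### Explicit solutions of scalar linear ODEs -/

def solG (κ G₀ : ℝ) (c : ℝ → ℝ) : ℝ → ℝ := fun t =>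
  Real.exp (-(∫ s in (0:ℝ)..t, (c s + κ))) *
    (G₀ + ∫ s in (0:ℝ)..t, c s * Real.exp (∫ u in (0:ℝ)..s, (c u + κ)))

def solE (μ ν E0v : ℝ) (Gf : ℝ → ℝ) : ℝ → ℝ := fun t =>
  Real.exp (-(ν * t)) * (E0v + μ * ∫ s in (0:ℝ)..t, Gf s * Real.exp (ν * s))

lemma solG_zero (κ G₀ : ℝ) (c : ℝ → ℝ) : solG κ G₀ c 0 = G₀ := by simp [solG]

lemma solE_zero (μ ν E0v : ℝ) (Gf : ℝ → ℝ) : solE μ ν E0v Gf 0 = E0v := by simp [solE]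

lemma solG_deriv {κ G₀ : ℝ} {c : ℝ → ℝ} (hc : Continuous c) (t : ℝ) :
    HasDerivAt (solG κ G₀ c) (c t * (1 - solG κ G₀ c t) - κ * solG κ G₀ c t) t := by
  have hcκ : Continuous fun s => c s + κ := hc.add continuous_const
  set A : ℝ → ℝ := fun u => ∫ s in (0:ℝ)..u, (c s + κ) with hA
  have hAc : Continuous A := ftc_cont hcκ
  have hb : Continuous fun s => c s * Real.exp (A s) := hc.mul (hAc.rexp)
  have h1 : HasDerivAt (fun u => Real.exp (-A u)) (Real.exp (-A t) * (-(c t + κ))) t := by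
    have := ((ftc hcκ t).neg).exp
    simpa using this
  have h2 : HasDerivAt (fun u => G₀ + ∫ s in (0:ℝ)..u, c s * Real.exp (A s))
      (c t * Real.exp (A t)) t := (ftc hb t).const_add G₀
  have h3 := h1.mul h2
  have key : Real.exp (-A t) * Real.exp (A t) = 1 := by
    rw [← Real.exp_add]; simp
  convert h3 using 1
  show c t * (1 - solG κ G₀ c t) - κ * solG κ G₀ c t = _
  have : solG κ G₀ c t
      = Real.exp (-A t) * (G₀ + ∫ s in (0:ℝ)..t, c s * Real.exp (A s)) := rfl
  rw [this]
  linear_combination (-(c t)) * key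
  all_goals rfl

lemma solG_cont {κ G₀ : ℝ} {c : ℝ → ℝ} (hc : Continuous c) :
    Continuous (solG κ G₀ c) :=
  continuous_iff_continuousAt.2 fun t => (solG_deriv hc t).continuousAt

lemma solG_bounds {κ G₀ : ℝ} {c : ℝ → ℝ} (hc : Continuous c)
    (hcpos : ∀ s, 0 < c s) (hκ : 0 < κ) (hG₀ : G₀ ∈ Icc (0:ℝ) 1)
    {t : ℝ} (ht : 0 ≤ t) :
    (0 ≤ solG κ G₀ c t ∧ solG κ G₀ c t ≤ 1) ∧
      (0 < t → 0 < solG κ G₀ c t ∧ solG κ G₀ c t < 1) := by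
  have hcκ : Continuous fun s => c s + κ := hc.add continuous_const
  set A : ℝ → ℝ := fun u => ∫ s in (0:ℝ)..u, (c s + κ) with hA
  have hAc : Continuous A := ftc_cont hcκ
  have hbc : Continuous fun s => c s * Real.exp (A s) := hc.mul hAc.rexp
  set B : ℝ := ∫ s in (0:ℝ)..t, c s * Real.exp (A s) with hB
  have hsol : solG κ G₀ c t = Real.exp (-A t) * (G₀ + B) := rfl
  have hexppos : 0 < Real.exp (-A t) := Real.exp_pos _
  have key : Real.exp (-A t) * Real.exp (A t) = 1 := by
    rw [← Real.exp_add]; simp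
  have hAd : ∀ x ∈ uIcc (0:ℝ) t, HasDerivAt (fun u => Real.exp (A u))
      ((c x + κ) * Real.exp (A x)) x := by
    intro x _
    simpa [mul_comm] using (ftc hcκ x).exp
  have hi : IntervalIntegrable (fun x => (c x + κ) * Real.exp (A x)) MeasureTheory.volume 0 t :=
    (hcκ.mul hAc.rexp).intervalIntegrable 0 t
  have hFTC2 : (∫ x in (0:ℝ)..t, (c x + κ) * Real.exp (A x))
      = Real.exp (A t) - 1 := by
    have h := integral_eq_sub_of_hasDerivAt hAd hi
    have hA0 : A 0 = 0 := integral_same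
    rw [hA0, Real.exp_zero] at h
    exact h
  have hsplit : (∫ x in (0:ℝ)..t, (c x + κ) * Real.exp (A x))
      = B + κ * ∫ x in (0:ℝ)..t, Real.exp (A x) := by
    rw [hB, ← integral_const_mul, ← integral_add (hbc.intervalIntegrable 0 t)
      ((hAc.rexp.intervalIntegrable 0 t).const_mul κ)]
    congr 1; ext x; ring
  have hInn : 0 ≤ ∫ x in (0:ℝ)..t, Real.exp (A x) :=
    integral_nonneg ht fun u _ => (Real.exp_pos _).le
  have hBnn : 0 ≤ B :=
    integral_nonneg ht fun u _ => le_of_lt (mul_pos (hcpos u) (Real.exp_pos _))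
  have hup : G₀ + B ≤ Real.exp (A t) := by nlinarith [hG₀.2]
  constructor
  · constructor
    · rw [hsol]
      exact mul_nonneg hexppos.le (by nlinarith [hG₀.1])
    · rw [hsol]
      calc Real.exp (-A t) * (G₀ + B) ≤ Real.exp (-A t) * Real.exp (A t) := by
            apply mul_le_mul_of_nonneg_left hup hexppos.le
        _ = 1 := key
  · intro htpos
    have hBpos : 0 < B :=
      intervalIntegral_pos_of_pos_on (hbc.intervalIntegrable 0 t)
        (fun x _ => mul_pos (hcpos x) (Real.exp_pos _)) htpos
    have hIpos : 0 < ∫ x in (0:ℝ)..t, Real.exp (A x) :=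
      intervalIntegral_pos_of_pos_on (hAc.rexp.intervalIntegrable 0 t)
        (fun x _ => Real.exp_pos _) htpos
    have hups : G₀ + B < Real.exp (A t) := by nlinarith [hG₀.2]
    constructor
    · rw [hsol]
      have : 0 < G₀ + B := by nlinarith [hG₀.1]
      exact mul_pos hexppos this
    · rw [hsol]
      calc Real.exp (-A t) * (G₀ + B) < Real.exp (-A t) * Real.exp (A t) :=
            mul_lt_mul_of_pos_left hups hexppos
        _ = 1 := key

lemma solE_deriv {μ ν E0v : ℝ} {Gf : ℝ → ℝ} (hG : Continuous Gf) (t : ℝ) :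
    HasDerivAt (solE μ ν E0v Gf) (μ * Gf t - ν * solE μ ν E0v Gf t) t := by
  have hbc : Continuous fun s => Gf s * Real.exp (ν * s) :=
    hG.mul (continuous_const.mul continuous_id).rexp
  have h1 : HasDerivAt (fun u : ℝ => Real.exp (-(ν * u))) (Real.exp (-(ν * t)) * (-ν)) t := by
    have : HasDerivAt (fun u : ℝ => -(ν * u)) (-ν) t := by
      simpa using ((hasDerivAt_id t).const_mul ν).fun_neg
    simpa using this.exp
  have h2 : HasDerivAt (fun u => E0v + μ * ∫ s in (0:ℝ)..u, Gf s * Real.exp (ν * s))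
      (μ * (Gf t * Real.exp (ν * t))) t := ((ftc hbc t).const_mul μ).const_add E0v
  have h3 := h1.mul h2
  have key : Real.exp (-(ν * t)) * Real.exp (ν * t) = 1 := by
    rw [← Real.exp_add]; simp
  convert h3 using 1
  show μ * Gf t - ν * (Real.exp (-(ν*t)) * (E0v + μ * ∫ s in (0:ℝ)..t, Gf s * Real.exp (ν * s))) = _
  linear_combination (-(μ * Gf t)) * key
  all_goals rfl

lemma solE_cont {μ ν E0v : ℝ} {Gf : ℝ → ℝ} (hG : Continuous Gf) :
    Continuous (solE μ ν E0v Gf) :=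
  continuous_iff_continuousAt.2 fun t => (solE_deriv hG t).continuousAt

lemma solE_nonneg {μ ν E0v : ℝ} {Gf : ℝ → ℝ} (hμ : 0 ≤ μ) (hE0 : 0 ≤ E0v)
    {t : ℝ} (ht : 0 ≤ t) (hGnn : ∀ s ∈ Icc 0 t, 0 ≤ Gf s) :
    0 ≤ solE μ ν E0v Gf t := by
  have : 0 ≤ ∫ s in (0:ℝ)..t, Gf s * Real.exp (ν * s) :=
    integral_nonneg ht fun u hu => mul_nonneg (hGnn u hu) (Real.exp_pos _).le
  have := mul_nonneg hμ this
  exact mul_nonneg (Real.exp_pos _).le (by linarith)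

lemma solE_pos {μ ν E0v : ℝ} {Gf : ℝ → ℝ} (hμ : 0 < μ) (hE0 : 0 ≤ E0v)
    (hG : Continuous Gf) {t : ℝ} (ht : 0 < t) (hGpos : ∀ s ∈ Ioo 0 t, 0 < Gf s) :
    0 < solE μ ν E0v Gf t := by
  have hbc : Continuous fun s => Gf s * Real.exp (ν * s) :=
    hG.mul (continuous_const.mul continuous_id).rexp
  have : 0 < ∫ s in (0:ℝ)..t, Gf s * Real.exp (ν * s) :=
    intervalIntegral_pos_of_pos_on (hbc.intervalIntegrable 0 t)
      (fun x hx => mul_pos (hGpos x hx) (Real.exp_pos _)) ht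
  have := mul_pos hμ this
  exact mul_pos (Real.exp_pos _) (by linarith)

lemma solE_le {μ ν E0v : ℝ} {Gf : ℝ → ℝ} (hμ : 0 < μ) (hν : 0 < ν)
    (hG : Continuous Gf) {t : ℝ} (ht : 0 ≤ t) (hGle : ∀ s ∈ Icc 0 t, Gf s ≤ 1) :
    solE μ ν E0v Gf t ≤ max E0v (μ / ν) := by
  have hbc : Continuous fun s => Gf s * Real.exp (ν * s) :=
    hG.mul (continuous_const.mul continuous_id).rexp
  have hC : (∫ s in (0:ℝ)..t, Gf s * Real.exp (ν * s)) ≤ ∫ s in (0:ℝ)..t, Real.exp (ν * s) := by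
    apply integral_mono_on ht (hbc.intervalIntegrable 0 t)
      ((continuous_const.mul continuous_id).rexp.intervalIntegrable 0 t)
    intro x hx
    show Gf x * Real.exp (ν * x) ≤ Real.exp (ν * x)
    nlinarith [hGle x hx, Real.exp_pos (ν * x)]
  have hExpInt : (∫ s in (0:ℝ)..t, Real.exp (ν * s))
      = Real.exp (ν * t) / ν - 1 / ν := by
    have hAd : ∀ x ∈ uIcc (0:ℝ) t, HasDerivAt (fun u => Real.exp (ν * u) / ν)
        (Real.exp (ν * x)) x := by
      intro x _
      have h : HasDerivAt (fun u : ℝ => ν * u) ν x := by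
        simpa using (hasDerivAt_id x).const_mul ν
      have := (h.exp).div_const ν
      simpa [mul_div_assoc, mul_div_cancel_left₀, hν.ne'] using this
    have := integral_eq_sub_of_hasDerivAt hAd
      ((continuous_const.mul continuous_id).rexp.intervalIntegrable 0 t)
    simpa using this
  set x := Real.exp (-(ν * t)) with hx
  have hx1 : x ≤ 1 := Real.exp_le_one_iff.2 (by nlinarith)
  have hx0 : 0 < x := Real.exp_pos _
  have key : x * Real.exp (ν * t) = 1 := by rw [hx, ← Real.exp_add]; simp
  have hEM : E0v ≤ max E0v (μ / ν) := le_max_left _ _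
  have hMM : μ / ν ≤ max E0v (μ / ν) := le_max_right _ _
  show x * (E0v + μ * ∫ s in (0:ℝ)..t, Gf s * Real.exp (ν * s)) ≤ max E0v (μ / ν)
  have h2 : μ * (∫ s in (0:ℝ)..t, Gf s * Real.exp (ν * s)) ≤ μ * (Real.exp (ν*t)/ν - 1/ν) :=
    mul_le_mul_of_nonneg_left (hC.trans hExpInt.le) hμ.le
  have hdiv : μ * (Real.exp (ν*t)/ν - 1/ν) * x = (μ/ν) * (1 - x) := by
    have hν' : ν ≠ 0 := hν.ne'
    field_simp
    linear_combination key
  nlinarith [mul_le_mul_of_nonneg_right h2 hx0.le, hx0.le, mul_le_mul_of_nonneg_right hEM hx0.le]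

/-! ### congruence lemmas -/

lemma mem_uIcc_le {t d x : ℝ} (ht : t ≤ d) (hd : 0 ≤ d) (hx : x ∈ uIcc 0 t) : x ≤ d := by
  rcases Set.mem_uIcc.mp hx with ⟨h1, h2⟩ | ⟨h1, h2⟩ <;> linarith

lemma solG_congr {κ G₀ : ℝ} {c₁ c₂ : ℝ → ℝ} {d : ℝ} (hd : 0 ≤ d)
    (h : ∀ s ≤ d, c₁ s = c₂ s) : ∀ t ≤ d, solG κ G₀ c₁ t = solG κ G₀ c₂ t := by
  have hI : ∀ s, s ≤ d → (∫ u in (0:ℝ)..s, (c₁ u + κ)) = ∫ u in (0:ℝ)..s, (c₂ u + κ) := by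
    intro s hs
    apply integral_congr
    intro u hu
    show c₁ u + κ = c₂ u + κ
    rw [h u (mem_uIcc_le hs hd hu)]
  intro t ht
  unfold solG
  rw [hI t ht]
  have : (∫ s in (0:ℝ)..t, c₁ s * Real.exp (∫ u in (0:ℝ)..s, (c₁ u + κ)))
      = ∫ s in (0:ℝ)..t, c₂ s * Real.exp (∫ u in (0:ℝ)..s, (c₂ u + κ)) := by
    apply integral_congr
    intro s hs
    show c₁ s * Real.exp (∫ u in (0:ℝ)..s, (c₁ u + κ)) = c₂ s * Real.exp (∫ u in (0:ℝ)..s, (c₂ u + κ))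
    rw [h s (mem_uIcc_le ht hd hs), hI s (mem_uIcc_le ht hd hs)]
  rw [this]

lemma solE_congr {μ ν E0v : ℝ} {G₁ G₂ : ℝ → ℝ} {d : ℝ} (hd : 0 ≤ d)
    (h : ∀ s ≤ d, G₁ s = G₂ s) : ∀ t ≤ d, solE μ ν E0v G₁ t = solE μ ν E0v G₂ t := by
  intro t ht
  unfold solE
  have : (∫ s in (0:ℝ)..t, G₁ s * Real.exp (ν * s))
      = ∫ s in (0:ℝ)..t, G₂ s * Real.exp (ν * s) := by
    apply integral_congr
    intro s hs
    show G₁ s * Real.exp (ν * s) = G₂ s * Real.exp (ν * s)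
    rw [h s (mem_uIcc_le ht hd hs)]
  rw [this]

variable (μ ν κ θ : ℝ) (g E₀ : ℝ → ℝ) (G₀ : ℝ)

def hist : ℝ → ℝ := fun t => E₀ (max (-θ) (min t 0))

def cfun (prevE : ℝ → ℝ) : ℝ → ℝ := fun s => g (prevE (s - θ))

def stepG (prevE : ℝ → ℝ) : ℝ → ℝ := solG κ G₀ (cfun θ g prevE)

def stepE (prevE : ℝ → ℝ) : ℝ → ℝ := fun t =>
  if t ≤ 0 then hist θ E₀ t else solE μ ν (E₀ 0) (stepG κ θ g G₀ prevE) t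

def stage : ℕ → (ℝ → ℝ) × (ℝ → ℝ)
  | 0 => (hist θ E₀, fun _ => G₀)
  | n + 1 => (stepE μ ν κ θ g E₀ G₀ (stage n).1, stepG κ θ g G₀ (stage n).1)

variable {μ ν κ θ g E₀ G₀}

section hyps
variable (hμ : 0 < μ) (hν : 0 < ν) (hκ : 0 < κ) (hθ : 0 < θ)
  (hgC1 : ContDiffOn ℝ 1 g (Ici 0)) (hgmono : MonotoneOn g (Ici 0)) (hg0 : 0 < g 0)
  (hE₀cont : ContinuousOn E₀ (Icc (-θ) 0)) (hE₀pos : ∀ t ∈ Icc (-θ) (0:ℝ), 0 ≤ E₀ t)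
  (hG₀ : G₀ ∈ Icc (0:ℝ) 1)

lemma hist_eq (hθ : 0 < θ) : ∀ t ∈ Icc (-θ) (0:ℝ), hist θ E₀ t = E₀ t := by
  intro t ht
  have : max (-θ) (min t 0) = t := by
    rw [min_eq_left ht.2, max_eq_right ht.1]
  rw [hist, this]

lemma hist_zero (hθ : 0 < θ) : hist θ E₀ 0 = E₀ 0 :=
  hist_eq hθ 0 ⟨by linarith, le_refl _⟩

lemma hist_cont (hθ : 0 < θ) (hE₀cont : ContinuousOn E₀ (Icc (-θ) 0)) :
    Continuous (hist θ E₀) := by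
  apply hE₀cont.comp_continuous
  · exact continuous_const.max (continuous_id.min continuous_const)
  · intro t
    constructor
    · exact le_max_left _ _
    · exact max_le (by linarith) (min_le_right _ _)

lemma hist_nonneg (hθ : 0 < θ) (hE₀pos : ∀ t ∈ Icc (-θ) (0:ℝ), 0 ≤ E₀ t) :
    ∀ t, 0 ≤ hist θ E₀ t := fun t =>
  hE₀pos _ ⟨le_max_left _ _, max_le (by linarith) (min_le_right _ _)⟩

lemma cfun_cont (hgC1 : ContDiffOn ℝ 1 g (Ici 0)) {prevE : ℝ → ℝ}
    (hc : Continuous prevE) (hp : ∀ t, 0 ≤ prevE t) :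
    Continuous (cfun θ g prevE) := by
  apply hgC1.continuousOn.comp_continuous
  · exact hc.comp (continuous_id.sub continuous_const)
  · exact fun s => hp _

lemma cfun_pos (hgmono : MonotoneOn g (Ici 0)) (hg0 : 0 < g 0) {prevE : ℝ → ℝ}
    (hp : ∀ t, 0 ≤ prevE t) : ∀ s, 0 < cfun θ g prevE s := fun s =>
  lt_of_lt_of_le hg0 (hgmono (le_refl (0:ℝ)) (hp _) (hp _))

/-- basic facts about stages, by induction : continuity and nonnegativity of the
`E` component. -/
lemma stage_inv (hμ : 0 < μ) (hν : 0 < ν) (hκ : 0 < κ) (hθ : 0 < θ)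
    (hgC1 : ContDiffOn ℝ 1 g (Ici 0)) (hgmono : MonotoneOn g (Ici 0)) (hg0 : 0 < g 0)
    (hE₀cont : ContinuousOn E₀ (Icc (-θ) 0)) (hE₀pos : ∀ t ∈ Icc (-θ) (0:ℝ), 0 ≤ E₀ t)
    (hG₀ : G₀ ∈ Icc (0:ℝ) 1) :
    ∀ n : ℕ, Continuous (stage μ ν κ θ g E₀ G₀ n).1 ∧
      (∀ t, 0 ≤ (stage μ ν κ θ g E₀ G₀ n).1 t) := by
  intro n
  induction n with
  | zero => exact ⟨hist_cont hθ hE₀cont, hist_nonneg hθ hE₀pos⟩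
  | succ n ih =>
    obtain ⟨hc, hp⟩ := ih
    have hcc : Continuous (cfun θ g (stage μ ν κ θ g E₀ G₀ n).1) := cfun_cont hgC1 hc hp
    have hcp : ∀ s, 0 < cfun θ g (stage μ ν κ θ g E₀ G₀ n).1 s := cfun_pos hgmono hg0 hp
    have hGc : Continuous (stepG κ θ g G₀ (stage μ ν κ θ g E₀ G₀ n).1) := solG_cont hcc
    have hGnn : ∀ s, 0 ≤ s → 0 ≤ stepG κ θ g G₀ (stage μ ν κ θ g E₀ G₀ n).1 s := by
      intro s hs
      exact ((solG_bounds hcc hcp hκ hG₀ hs).1).1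
    have hE0nn : 0 ≤ E₀ 0 := hE₀pos 0 ⟨by linarith, le_refl _⟩
    constructor
    · show Continuous (stepE μ ν κ θ g E₀ G₀ (stage μ ν κ θ g E₀ G₀ n).1)
      unfold stepE
      apply Continuous.if_le (hist_cont hθ hE₀cont) (solE_cont hGc) continuous_id
        continuous_const
      intro t ht
      simp only [id] at ht
      rw [ht, hist_zero hθ, solE_zero]
    · intro t
      show 0 ≤ stepE μ ν κ θ g E₀ G₀ (stage μ ν κ θ g E₀ G₀ n).1 t
      unfold stepE
      by_cases h : t ≤ 0
      · simp only [h, if_true]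
        exact hist_nonneg hθ hE₀pos t
      · simp only [h, if_false]
        push_neg at h
        exact solE_nonneg hμ.le hE0nn h.le (fun s hs => hGnn s hs.1)

lemma stage_hist : ∀ (n : ℕ) (t : ℝ), t ≤ 0 →
    (stage μ ν κ θ g E₀ G₀ n).1 t = hist θ E₀ t := by
  intro n t ht
  cases n with
  | zero => rfl
  | succ n => show stepE μ ν κ θ g E₀ G₀ _ t = _ ; rw [stepE, if_pos ht]

lemma stepG_congr (hθ : 0 < θ) {p₁ p₂ : ℝ → ℝ} {c : ℝ} (hc : 0 ≤ c)
    (h : ∀ s ≤ c, p₁ s = p₂ s) :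
    ∀ t ≤ c + θ, stepG κ θ g G₀ p₁ t = stepG κ θ g G₀ p₂ t := by
  apply solG_congr (by linarith)
  intro s hs
  unfold cfun
  rw [h (s - θ) (by linarith)]

lemma stepE_congr (hθ : 0 < θ) {p₁ p₂ : ℝ → ℝ} {c : ℝ} (hc : 0 ≤ c)
    (h : ∀ s ≤ c, p₁ s = p₂ s) :
    ∀ t ≤ c + θ, stepE μ ν κ θ g E₀ G₀ p₁ t = stepE μ ν κ θ g E₀ G₀ p₂ t := by
  intro t ht
  unfold stepE
  by_cases h0 : t ≤ 0
  · rw [if_pos h0, if_pos h0]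
  · rw [if_neg h0, if_neg h0]
    exact solE_congr (by linarith) (stepG_congr hθ hc h) t ht

lemma agreeE (hθ : 0 < θ) : ∀ (n : ℕ) (t : ℝ), t ≤ (n : ℝ) * θ →
    (stage μ ν κ θ g E₀ G₀ (n+1)).1 t = (stage μ ν κ θ g E₀ G₀ n).1 t := by
  intro n
  induction n with
  | zero =>
    intro t ht
    simp only [Nat.cast_zero, zero_mul] at ht
    rw [stage_hist (n := 1) t ht, stage_hist (n := 0) t ht]
  | succ n ih =>
    intro t ht
    have h1 : ((n : ℝ) + 1) * θ = (n : ℝ) * θ + θ := by ring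
    have ht' : t ≤ (n : ℝ) * θ + θ := by
      push_cast at ht; linarith
    exact stepE_congr hθ (by positivity) ih t ht'

lemma agreeG (hθ : 0 < θ) : ∀ (n : ℕ) (t : ℝ), t ≤ ((n : ℝ) + 1) * θ →
    (stage μ ν κ θ g E₀ G₀ (n+2)).2 t = (stage μ ν κ θ g E₀ G₀ (n+1)).2 t := by
  intro n t ht
  exact stepG_congr hθ (by positivity) (agreeE hθ n) t (by linarith [ht])

lemma evalE (hθ : 0 < θ) : ∀ (m n : ℕ), n ≤ m → ∀ t ≤ (n : ℝ) * θ,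
    (stage μ ν κ θ g E₀ G₀ m).1 t = (stage μ ν κ θ g E₀ G₀ n).1 t := by
  intro m n hnm
  induction m, hnm using Nat.le_induction with
  | base => intro t _; rfl
  | succ m hm ih =>
    intro t ht
    have hle : (n : ℝ) * θ ≤ (m : ℝ) * θ :=
      mul_le_mul_of_nonneg_right (Nat.cast_le.2 hm) hθ.le
    rw [agreeE hθ m t (ht.trans hle), ih t ht]

lemma evalG (hθ : 0 < θ) : ∀ (m n : ℕ), n + 1 ≤ m → ∀ t ≤ ((n : ℝ) + 1) * θ,
    (stage μ ν κ θ g E₀ G₀ m).2 t = (stage μ ν κ θ g E₀ G₀ (n+1)).2 t := by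
  intro m n hnm
  induction m, hnm using Nat.le_induction with
  | base => intro t _; rfl
  | succ m hm ih =>
    intro t ht
    obtain ⟨k, rfl⟩ : ∃ k, m = k + 1 := ⟨m - 1, by omega⟩
    have hle : ((n : ℝ) + 1) * θ ≤ ((k : ℝ) + 1) * θ := by
      have : (n : ℝ) ≤ (k : ℝ) := Nat.cast_le.2 (by omega)
      nlinarith [hθ.le]
    rw [agreeG hθ k t (ht.trans hle), ih t ht]

lemma stage_G_zero (n : ℕ) : (stage μ ν κ θ g E₀ G₀ (n+1)).2 0 = G₀ :=
  solG_zero _ _ _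

lemma stage_succ_E (n : ℕ) :
    (stage μ ν κ θ g E₀ G₀ (n+1)).1 = stepE μ ν κ θ g E₀ G₀ (stage μ ν κ θ g E₀ G₀ n).1 := rfl

lemma stage_derivG (hμ : 0 < μ) (hν : 0 < ν) (hκ : 0 < κ) (hθ : 0 < θ)
    (hgC1 : ContDiffOn ℝ 1 g (Ici 0)) (hgmono : MonotoneOn g (Ici 0)) (hg0 : 0 < g 0)
    (hE₀cont : ContinuousOn E₀ (Icc (-θ) 0)) (hE₀pos : ∀ t ∈ Icc (-θ) (0:ℝ), 0 ≤ E₀ t)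
    (hG₀ : G₀ ∈ Icc (0:ℝ) 1) (n : ℕ) (t : ℝ) :
    HasDerivAt (stage μ ν κ θ g E₀ G₀ (n+1)).2
      (g ((stage μ ν κ θ g E₀ G₀ n).1 (t - θ)) * (1 - (stage μ ν κ θ g E₀ G₀ (n+1)).2 t)
        - κ * (stage μ ν κ θ g E₀ G₀ (n+1)).2 t) t := by
  obtain ⟨hc, hp⟩ := stage_inv hμ hν hκ hθ hgC1 hgmono hg0 hE₀cont hE₀pos hG₀ n
  exact solG_deriv (cfun_cont hgC1 hc hp) t

lemma stage_G_cont (hμ : 0 < μ) (hν : 0 < ν) (hκ : 0 < κ) (hθ : 0 < θ)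
    (hgC1 : ContDiffOn ℝ 1 g (Ici 0)) (hgmono : MonotoneOn g (Ici 0)) (hg0 : 0 < g 0)
    (hE₀cont : ContinuousOn E₀ (Icc (-θ) 0)) (hE₀pos : ∀ t ∈ Icc (-θ) (0:ℝ), 0 ≤ E₀ t)
    (hG₀ : G₀ ∈ Icc (0:ℝ) 1) (n : ℕ) : Continuous (stage μ ν κ θ g E₀ G₀ (n+1)).2 := by
  obtain ⟨hc, hp⟩ := stage_inv hμ hν hκ hθ hgC1 hgmono hg0 hE₀cont hE₀pos hG₀ n
  exact solG_cont (cfun_cont hgC1 hc hp)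

lemma stage_G_bounds (hμ : 0 < μ) (hν : 0 < ν) (hκ : 0 < κ) (hθ : 0 < θ)
    (hgC1 : ContDiffOn ℝ 1 g (Ici 0)) (hgmono : MonotoneOn g (Ici 0)) (hg0 : 0 < g 0)
    (hE₀cont : ContinuousOn E₀ (Icc (-θ) 0)) (hE₀pos : ∀ t ∈ Icc (-θ) (0:ℝ), 0 ≤ E₀ t)
    (hG₀ : G₀ ∈ Icc (0:ℝ) 1) (n : ℕ) {t : ℝ} (ht : 0 ≤ t) :
    (0 ≤ (stage μ ν κ θ g E₀ G₀ (n+1)).2 t ∧ (stage μ ν κ θ g E₀ G₀ (n+1)).2 t ≤ 1) ∧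
      (0 < t → 0 < (stage μ ν κ θ g E₀ G₀ (n+1)).2 t ∧ (stage μ ν κ θ g E₀ G₀ (n+1)).2 t < 1) := by
  obtain ⟨hc, hp⟩ := stage_inv hμ hν hκ hθ hgC1 hgmono hg0 hE₀cont hE₀pos hG₀ n
  exact solG_bounds (cfun_cont hgC1 hc hp) (cfun_pos hgmono hg0 hp) hκ hG₀ ht

lemma stage_E_eq_solE (hθ : 0 < θ) (n : ℕ) :
    EqOn (stage μ ν κ θ g E₀ G₀ (n+1)).1
      (solE μ ν (E₀ 0) (stage μ ν κ θ g E₀ G₀ (n+1)).2) (Ici 0) := by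
  intro s hs
  rw [stage_succ_E]
  unfold stepE
  by_cases h0 : s ≤ 0
  · have : s = 0 := le_antisymm h0 hs
    subst this
    rw [if_pos le_rfl, hist_zero hθ, solE_zero]
  · rw [if_neg h0]
    rfl

lemma stage_derivE (hμ : 0 < μ) (hν : 0 < ν) (hκ : 0 < κ) (hθ : 0 < θ)
    (hgC1 : ContDiffOn ℝ 1 g (Ici 0)) (hgmono : MonotoneOn g (Ici 0)) (hg0 : 0 < g 0)
    (hE₀cont : ContinuousOn E₀ (Icc (-θ) 0)) (hE₀pos : ∀ t ∈ Icc (-θ) (0:ℝ), 0 ≤ E₀ t)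
    (hG₀ : G₀ ∈ Icc (0:ℝ) 1) (n : ℕ) {t : ℝ} (ht : 0 ≤ t) :
    HasDerivWithinAt (stage μ ν κ θ g E₀ G₀ (n+1)).1
      (μ * (stage μ ν κ θ g E₀ G₀ (n+1)).2 t - ν * (stage μ ν κ θ g E₀ G₀ (n+1)).1 t)
      (Ici 0) t := by
  have hGc := stage_G_cont hμ hν hκ hθ hgC1 hgmono hg0 hE₀cont hE₀pos hG₀ n
  have heq := stage_E_eq_solE (μ := μ) (ν := ν) (g := g) (G₀ := G₀) (E₀ := E₀) (κ := κ) hθ n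
  have hd := (solE_deriv (E0v := E₀ 0) (μ := μ) (ν := ν) hGc t).hasDerivWithinAt (s := Ici 0)
  rw [heq ht]
  exact hd.congr heq (heq ht)

lemma stage_E_bounds (hμ : 0 < μ) (hν : 0 < ν) (hκ : 0 < κ) (hθ : 0 < θ)
    (hgC1 : ContDiffOn ℝ 1 g (Ici 0)) (hgmono : MonotoneOn g (Ici 0)) (hg0 : 0 < g 0)
    (hE₀cont : ContinuousOn E₀ (Icc (-θ) 0)) (hE₀pos : ∀ t ∈ Icc (-θ) (0:ℝ), 0 ≤ E₀ t)
    (hG₀ : G₀ ∈ Icc (0:ℝ) 1) (n : ℕ) {t : ℝ} (ht : 0 < t) :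
    0 < (stage μ ν κ θ g E₀ G₀ (n+1)).1 t ∧
      (stage μ ν κ θ g E₀ G₀ (n+1)).1 t ≤ max (E₀ 0) (μ / ν) := by
  have hGc := stage_G_cont hμ hν hκ hθ hgC1 hgmono hg0 hE₀cont hE₀pos hG₀ n
  have heq := stage_E_eq_solE (μ := μ) (ν := ν) (g := g) (G₀ := G₀) (E₀ := E₀) (κ := κ) hθ n
  have hE0nn : 0 ≤ E₀ 0 := hE₀pos 0 ⟨by linarith, le_rfl⟩
  rw [heq ht.le]
  constructor
  · apply solE_pos hμ hE0nn hGc ht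
    intro s hs
    exact ((stage_G_bounds hμ hν hκ hθ hgC1 hgmono hg0 hE₀cont hE₀pos hG₀ n hs.1.le).2 hs.1).1
  · apply solE_le hμ hν hGc ht.le
    intro s hs
    exact ((stage_G_bounds hμ hν hκ hθ hgC1 hgmono hg0 hE₀cont hE₀pos hG₀ n hs.1).1).2


end hyps

attribute [local irreducible] stage

def Nidx (θ t : ℝ) : ℕ := ⌈t / θ⌉₊

lemma le_Nidx {θ : ℝ} (hθ : 0 < θ) (t : ℝ) : t ≤ (Nidx θ t : ℝ) * θ := by
  have h := Nat.le_ceil (t / θ)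
  calc t = t / θ * θ := by field_simp
    _ ≤ (Nidx θ t : ℝ) * θ := mul_le_mul_of_nonneg_right h hθ.le

lemma lt_succ_Nidx {θ : ℝ} (hθ : 0 < θ) (t : ℝ) : t < ((Nidx θ t : ℝ) + 1) * θ := by
  have := le_Nidx hθ t
  nlinarith

variable (μ ν κ θ : ℝ) (g E₀ : ℝ → ℝ) (G₀ : ℝ)

def Esol : ℝ → ℝ := fun t => (stage μ ν κ θ g E₀ G₀ (Nidx θ t + 1)).1 t
def Gsol : ℝ → ℝ := fun t => (stage μ ν κ θ g E₀ G₀ (Nidx θ t + 1)).2 t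

variable {μ ν κ θ g E₀ G₀}

lemma Esol_eval (hθ : 0 < θ) (n : ℕ) {t : ℝ} (ht : t ≤ (n : ℝ) * θ) :
    Esol μ ν κ θ g E₀ G₀ t = (stage μ ν κ θ g E₀ G₀ n).1 t := by
  have hk : t ≤ ((Nidx θ t : ℝ) + 1) * θ := by
    have := le_Nidx hθ t
    nlinarith [hθ.le]
  rcases le_total (Nidx θ t + 1) n with h | h
  · have := evalE (μ := μ) (ν := ν) (κ := κ) (g := g) (E₀ := E₀) (G₀ := G₀) hθ n (Nidx θ t + 1) h t (by push_cast; exact hk)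
    rw [Esol, ← this]
  · exact evalE (μ := μ) (ν := ν) (κ := κ) (g := g) (E₀ := E₀) (G₀ := G₀) hθ (Nidx θ t + 1) n h t ht

lemma Gsol_eval (hθ : 0 < θ) (n : ℕ) {t : ℝ} (ht : t ≤ ((n : ℝ) + 1) * θ) :
    Gsol μ ν κ θ g E₀ G₀ t = (stage μ ν κ θ g E₀ G₀ (n + 1)).2 t := by
  have hk : t ≤ ((Nidx θ t : ℝ) + 1) * θ := by
    have := le_Nidx hθ t
    nlinarith [hθ.le]
  rcases le_total (Nidx θ t + 1) (n + 1) with h | h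
  · have := evalG (μ := μ) (ν := ν) (κ := κ) (g := g) (E₀ := E₀) (G₀ := G₀) hθ (n + 1) (Nidx θ t) h t hk
    rw [Gsol, ← this]
  · exact evalG (μ := μ) (ν := ν) (κ := κ) (g := g) (E₀ := E₀) (G₀ := G₀) hθ (Nidx θ t + 1) n h t ht

lemma Esol_nonneg (hμ : 0 < μ) (hν : 0 < ν) (hκ : 0 < κ) (hθ : 0 < θ)
    (hgC1 : ContDiffOn ℝ 1 g (Ici 0)) (hgmono : MonotoneOn g (Ici 0)) (hg0 : 0 < g 0)
    (hE₀cont : ContinuousOn E₀ (Icc (-θ) 0)) (hE₀pos : ∀ t ∈ Icc (-θ) (0:ℝ), 0 ≤ E₀ t)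
    (hG₀ : G₀ ∈ Icc (0:ℝ) 1) (t : ℝ) : 0 ≤ Esol μ ν κ θ g E₀ G₀ t :=
  (stage_inv hμ hν hκ hθ hgC1 hgmono hg0 hE₀cont hE₀pos hG₀ (Nidx θ t + 1)).2 t

set_option maxHeartbeats 2000000 in
lemma Esol_cont (hμ : 0 < μ) (hν : 0 < ν) (hκ : 0 < κ) (hθ : 0 < θ)
    (hgC1 : ContDiffOn ℝ 1 g (Ici 0)) (hgmono : MonotoneOn g (Ici 0)) (hg0 : 0 < g 0)
    (hE₀cont : ContinuousOn E₀ (Icc (-θ) 0)) (hE₀pos : ∀ t ∈ Icc (-θ) (0:ℝ), 0 ≤ E₀ t)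
    (hG₀ : G₀ ∈ Icc (0:ℝ) 1) : Continuous (Esol μ ν κ θ g E₀ G₀) := by
  rw [continuous_iff_continuousAt]
  intro t
  set n := Nidx θ t + 1 with hn
  have h1 : t < (n : ℝ) * θ := by
    have := lt_succ_Nidx hθ t
    rw [hn]; push_cast; linarith
  have hc := (stage_inv hμ hν hκ hθ hgC1 hgmono hg0 hE₀cont hE₀pos hG₀ n).1
  apply hc.continuousAt.congr
  apply Filter.eventuallyEq_of_mem (Iio_mem_nhds h1)
  intro s hs
  exact (Esol_eval hθ n (le_of_lt hs)).symm

set_option maxHeartbeats 2000000 in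
lemma Gsol_cont (hμ : 0 < μ) (hν : 0 < ν) (hκ : 0 < κ) (hθ : 0 < θ)
    (hgC1 : ContDiffOn ℝ 1 g (Ici 0)) (hgmono : MonotoneOn g (Ici 0)) (hg0 : 0 < g 0)
    (hE₀cont : ContinuousOn E₀ (Icc (-θ) 0)) (hE₀pos : ∀ t ∈ Icc (-θ) (0:ℝ), 0 ≤ E₀ t)
    (hG₀ : G₀ ∈ Icc (0:ℝ) 1) : Continuous (Gsol μ ν κ θ g E₀ G₀) := by
  rw [continuous_iff_continuousAt]
  intro t
  set n := Nidx θ t with hn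
  have h1 : t < ((n : ℝ) + 1) * θ := lt_succ_Nidx hθ t
  have hc := stage_G_cont hμ hν hκ hθ hgC1 hgmono hg0 hE₀cont hE₀pos hG₀ n
  apply hc.continuousAt.congr
  apply Filter.eventuallyEq_of_mem (Iio_mem_nhds h1)
  intro s hs
  exact (Gsol_eval hθ n (le_of_lt hs)).symm

lemma Gsol_zero (hθ : 0 < θ) : Gsol μ ν κ θ g E₀ G₀ 0 = G₀ := by
  have := Gsol_eval (μ := μ) (ν := ν) (g := g) (E₀ := E₀) (G₀ := G₀) (κ := κ) hθ 0
    (t := 0) (by nlinarith)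
  rw [this]
  exact stage_G_zero 0

lemma Esol_hist (hθ : 0 < θ) : ∀ t ∈ Icc (-θ) (0:ℝ), Esol μ ν κ θ g E₀ G₀ t = E₀ t := by
  intro t ht
  rw [Esol, stage_hist _ t ht.2]
  exact hist_eq hθ t ht

lemma Esol_hist' (hθ : 0 < θ) (t : ℝ) (ht : t ≤ 0) :
    Esol μ ν κ θ g E₀ G₀ t = hist θ E₀ t := by
  rw [Esol, stage_hist _ t ht]

lemma Esol_deriv (hμ : 0 < μ) (hν : 0 < ν) (hκ : 0 < κ) (hθ : 0 < θ)
    (hgC1 : ContDiffOn ℝ 1 g (Ici 0)) (hgmono : MonotoneOn g (Ici 0)) (hg0 : 0 < g 0)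
    (hE₀cont : ContinuousOn E₀ (Icc (-θ) 0)) (hE₀pos : ∀ t ∈ Icc (-θ) (0:ℝ), 0 ≤ E₀ t)
    (hG₀ : G₀ ∈ Icc (0:ℝ) 1) {t : ℝ} (ht : 0 ≤ t) :
    HasDerivWithinAt (Esol μ ν κ θ g E₀ G₀)
      (μ * Gsol μ ν κ θ g E₀ G₀ t - ν * Esol μ ν κ θ g E₀ G₀ t) (Ici 0) t := by
  set n := Nidx θ t with hn
  have h1 : t < ((n : ℝ) + 1) * θ := lt_succ_Nidx hθ t
  have hd := stage_derivE hμ hν hκ hθ hgC1 hgmono hg0 hE₀cont hE₀pos hG₀ n ht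
  have hg : Gsol μ ν κ θ g E₀ G₀ t = (stage μ ν κ θ g E₀ G₀ (n+1)).2 t :=
    Gsol_eval hθ n h1.le
  have he : Esol μ ν κ θ g E₀ G₀ t = (stage μ ν κ θ g E₀ G₀ (n+1)).1 t :=
    Esol_eval hθ (n+1) (by push_cast; linarith)
  rw [hg, he]
  apply hd.congr_of_eventuallyEq _ he
  apply Filter.eventuallyEq_of_mem (mem_nhdsWithin_of_mem_nhds
    (Iio_mem_nhds (show t < ((n:ℝ)+1)*θ from h1)))
  intro s hs
  exact Esol_eval hθ (n+1) (by push_cast; exact le_of_lt hs)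

lemma Gsol_deriv (hμ : 0 < μ) (hν : 0 < ν) (hκ : 0 < κ) (hθ : 0 < θ)
    (hgC1 : ContDiffOn ℝ 1 g (Ici 0)) (hgmono : MonotoneOn g (Ici 0)) (hg0 : 0 < g 0)
    (hE₀cont : ContinuousOn E₀ (Icc (-θ) 0)) (hE₀pos : ∀ t ∈ Icc (-θ) (0:ℝ), 0 ≤ E₀ t)
    (hG₀ : G₀ ∈ Icc (0:ℝ) 1) {t : ℝ} (ht : 0 ≤ t) :
    HasDerivWithinAt (Gsol μ ν κ θ g E₀ G₀)
      (g (Esol μ ν κ θ g E₀ G₀ (t - θ)) * (1 - Gsol μ ν κ θ g E₀ G₀ t)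
        - κ * Gsol μ ν κ θ g E₀ G₀ t) (Ici 0) t := by
  set n := Nidx θ t with hn
  have h1 : t < ((n : ℝ) + 1) * θ := lt_succ_Nidx hθ t
  have hle : t ≤ (n : ℝ) * θ := le_Nidx hθ t
  have hd := (stage_derivG hμ hν hκ hθ hgC1 hgmono hg0 hE₀cont hE₀pos hG₀ n t).hasDerivWithinAt
    (s := Ici 0)
  have hcoef : (stage μ ν κ θ g E₀ G₀ n).1 (t - θ) = Esol μ ν κ θ g E₀ G₀ (t - θ) :=
    (Esol_eval hθ n (by linarith)).symm
  have hg : Gsol μ ν κ θ g E₀ G₀ t = (stage μ ν κ θ g E₀ G₀ (n+1)).2 t :=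
    Gsol_eval hθ n h1.le
  rw [← hcoef, hg]
  apply hd.congr_of_eventuallyEq _ hg
  apply Filter.eventuallyEq_of_mem (mem_nhdsWithin_of_mem_nhds (Iio_mem_nhds h1))
  intro s hs
  exact Gsol_eval hθ n (le_of_lt hs)

lemma Esol_bounds (hμ : 0 < μ) (hν : 0 < ν) (hκ : 0 < κ) (hθ : 0 < θ)
    (hgC1 : ContDiffOn ℝ 1 g (Ici 0)) (hgmono : MonotoneOn g (Ici 0)) (hg0 : 0 < g 0)
    (hE₀cont : ContinuousOn E₀ (Icc (-θ) 0)) (hE₀pos : ∀ t ∈ Icc (-θ) (0:ℝ), 0 ≤ E₀ t)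
    (hG₀ : G₀ ∈ Icc (0:ℝ) 1) {t : ℝ} (ht : 0 < t) :
    0 < Esol μ ν κ θ g E₀ G₀ t ∧ Esol μ ν κ θ g E₀ G₀ t ≤ max (E₀ 0) (μ / ν) := by
  have he : Esol μ ν κ θ g E₀ G₀ t = (stage μ ν κ θ g E₀ G₀ (Nidx θ t + 1)).1 t := rfl
  rw [he]
  exact stage_E_bounds hμ hν hκ hθ hgC1 hgmono hg0 hE₀cont hE₀pos hG₀ (Nidx θ t) ht

lemma Gsol_bounds (hμ : 0 < μ) (hν : 0 < ν) (hκ : 0 < κ) (hθ : 0 < θ)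
    (hgC1 : ContDiffOn ℝ 1 g (Ici 0)) (hgmono : MonotoneOn g (Ici 0)) (hg0 : 0 < g 0)
    (hE₀cont : ContinuousOn E₀ (Icc (-θ) 0)) (hE₀pos : ∀ t ∈ Icc (-θ) (0:ℝ), 0 ≤ E₀ t)
    (hG₀ : G₀ ∈ Icc (0:ℝ) 1) {t : ℝ} (ht : 0 < t) :
    0 < Gsol μ ν κ θ g E₀ G₀ t ∧ Gsol μ ν κ θ g E₀ G₀ t < 1 := by
  have hg : Gsol μ ν κ θ g E₀ G₀ t = (stage μ ν κ θ g E₀ G₀ (Nidx θ t + 1)).2 t := rfl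
  rw [hg]
  exact (stage_G_bounds hμ hν hκ hθ hgC1 hgmono hg0 hE₀cont hE₀pos hG₀ (Nidx θ t) ht.le).2 ht

variable {μ ν κ θ : ℝ} {g E₀ : ℝ → ℝ} {G₀ : ℝ}

lemma uniqueness (hμ : 0 < μ) (hν : 0 < ν) (hκ : 0 < κ) (hθ : 0 < θ)
    (hgC1 : ContDiffOn ℝ 1 g (Ici 0)) (hgmono : MonotoneOn g (Ici 0)) (hg0 : 0 < g 0)
    (hE₀cont : ContinuousOn E₀ (Icc (-θ) 0)) (hE₀pos : ∀ t ∈ Icc (-θ) (0:ℝ), 0 ≤ E₀ t)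
    (hG₀ : G₀ ∈ Icc (0:ℝ) 1) (E' G' : ℝ → ℝ)
    (h1 : ∀ t ∈ Icc (-θ) (0:ℝ), E' t = E₀ t) (h2 : G' 0 = G₀)
    (h3 : ∀ t ∈ Ici (0:ℝ), HasDerivWithinAt E' (μ * G' t - ν * E' t) (Ici 0) t)
    (h4 : ∀ t ∈ Ici (0:ℝ),
      HasDerivWithinAt G' (g (E' (t - θ)) * (1 - G' t) - κ * G' t) (Ici 0) t) :
    (∀ t : ℝ, -θ ≤ t → E' t = Esol μ ν κ θ g E₀ G₀ t) ∧
      (∀ t : ℝ, 0 ≤ t → G' t = Gsol μ ν κ θ g E₀ G₀ t) := by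
  have hE'c : ContinuousOn E' (Ici 0) := fun t ht => (h3 t ht).continuousWithinAt
  have hG'c : ContinuousOn G' (Ici 0) := fun t ht => (h4 t ht).continuousWithinAt
  have hEsolc : Continuous (Esol μ ν κ θ g E₀ G₀) :=
    Esol_cont hμ hν hκ hθ hgC1 hgmono hg0 hE₀cont hE₀pos hG₀
  have hGsolc : Continuous (Gsol μ ν κ θ g E₀ G₀) :=
    Gsol_cont hμ hν hκ hθ hgC1 hgmono hg0 hE₀cont hE₀pos hG₀
  have hEnn : ∀ t, 0 ≤ Esol μ ν κ θ g E₀ G₀ t :=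
    Esol_nonneg hμ hν hκ hθ hgC1 hgmono hg0 hE₀cont hE₀pos hG₀
  have hccont : Continuous (fun s => g (Esol μ ν κ θ g E₀ G₀ (s - θ))) := by
    apply hgC1.continuousOn.comp_continuous
    · exact hEsolc.comp (continuous_id.sub continuous_const)
    · exact fun s => hEnn _
  have key : ∀ n : ℕ, (∀ t ∈ Icc (-θ) ((n:ℝ)*θ), E' t = Esol μ ν κ θ g E₀ G₀ t) ∧
      (∀ t ∈ Icc (0:ℝ) ((n:ℝ)*θ), G' t = Gsol μ ν κ θ g E₀ G₀ t) := by
    intro n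
    induction n with
    | zero =>
      constructor
      · intro t ht
        simp only [Nat.cast_zero, zero_mul] at ht
        rw [h1 t ht, Esol_hist hθ t ht]
      · intro t ht
        simp only [Nat.cast_zero, zero_mul] at ht
        have : t = 0 := le_antisymm ht.2 ht.1
        subst this
        rw [h2, Gsol_zero hθ]
    | succ n ih =>
      obtain ⟨ihE, ihG⟩ := ih
      set T : ℝ := ((n:ℝ)+1)*θ with hT
      have hT0 : 0 < T := by positivity
      have hTn : (n:ℝ)*θ = T - θ := by rw [hT]; ring
      -- projection onto [0, T]
      set proj : ℝ → ℝ := fun s => max 0 (min s T) with hproj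
      have hprojc : Continuous proj := continuous_const.max (continuous_id.min continuous_const)
      have hprojmem : ∀ s, proj s ∈ Icc (0:ℝ) T := fun s =>
        ⟨le_max_left _ _, max_le hT0.le (min_le_right _ _)⟩
      have hprojeq : ∀ s ∈ Icc (0:ℝ) T, proj s = s := by
        intro s hs
        rw [hproj]
        simp only
        rw [min_eq_left hs.2, max_eq_right hs.1]
      -- bound for the coefficient
      obtain ⟨K, hK⟩ := (isCompact_Icc (a := (0:ℝ)) (b := T)).exists_bound_of_continuousOn
        hccont.continuousOn
      have hK0 : 0 ≤ K := le_trans (norm_nonneg _) (hK 0 ⟨le_rfl, hT0.le⟩)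
      set b : ℝ → ℝ := fun s => g (Esol μ ν κ θ g E₀ G₀ (proj s - θ)) with hb
      have hbK : ∀ s, |b s| ≤ K := fun s => hK _ (hprojmem s)
      set v : ℝ → ℝ → ℝ := fun s x => b s * (1 - x) - κ * x with hv
      have hLip : ∀ s, LipschitzWith (Real.toNNReal (K + κ)) (v s) := by
        intro s
        apply LipschitzWith.of_dist_le_mul
        intro x y
        rw [Real.dist_eq, Real.dist_eq, Real.coe_toNNReal _ (by linarith)]
        have : v s x - v s y = (b s + κ) * (y - x) := by rw [hv]; ring
        rw [this, abs_mul]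
        apply mul_le_mul_of_nonneg_right _ (abs_nonneg _) |>.trans_eq (by rw [abs_sub_comm])
        calc |b s + κ| ≤ |b s| + |κ| := abs_add_le _ _
          _ ≤ K + κ := by
              have := hbK s
              rw [abs_of_pos hκ]
              linarith
      -- uniqueness for G on [0, T]
      have hGeq : EqOn G' (Gsol μ ν κ θ g E₀ G₀) (Icc 0 T) := by
        apply ODE_solution_unique hLip
          (hG'c.mono (Icc_subset_Ici_self)) ?_ (hGsolc.continuousOn) ?_
          (h2.trans (Gsol_zero hθ).symm)
        · intro s hs
          have hd := (h4 s hs.1).mono (Ici_subset_Ici.2 hs.1)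
          have hval : v s (G' s) = g (E' (s - θ)) * (1 - G' s) - κ * G' s := by
            rw [hv]
            simp only
            rw [hb]
            simp only
            rw [hprojeq s ⟨hs.1, hs.2.le⟩]
            rw [ihE (s - θ) ⟨by linarith [hs.1], by linarith [hs.2, hTn]⟩]
          rw [hval]
          exact hd
        · intro s hs
          have hd := (Gsol_deriv hμ hν hκ hθ hgC1 hgmono hg0 hE₀cont hE₀pos hG₀ hs.1).mono
            (Ici_subset_Ici.2 hs.1)
          have hval : v s (Gsol μ ν κ θ g E₀ G₀ s)
              = g (Esol μ ν κ θ g E₀ G₀ (s - θ)) * (1 - Gsol μ ν κ θ g E₀ G₀ s)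
                - κ * Gsol μ ν κ θ g E₀ G₀ s := by
            rw [hv]
            simp only
            rw [hb]
            simp only
            rw [hprojeq s ⟨hs.1, hs.2.le⟩]
          rw [hval]
          exact hd
      -- uniqueness for E on [0, T]
      set v2 : ℝ → ℝ → ℝ := fun s x => μ * Gsol μ ν κ θ g E₀ G₀ s - ν * x with hv2
      have hLip2 : ∀ s, LipschitzWith (Real.toNNReal ν) (v2 s) := by
        intro s
        apply LipschitzWith.of_dist_le_mul
        intro x y
        rw [Real.dist_eq, Real.dist_eq, Real.coe_toNNReal _ hν.le]
        have : v2 s x - v2 s y = ν * (y - x) := by rw [hv2]; ring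
        rw [this, abs_mul, abs_of_pos hν, abs_sub_comm]
      have hE0 : E' 0 = Esol μ ν κ θ g E₀ G₀ 0 := by
        rw [h1 0 ⟨by linarith, le_rfl⟩, Esol_hist hθ 0 ⟨by linarith, le_rfl⟩]
      have hEeq : EqOn E' (Esol μ ν κ θ g E₀ G₀) (Icc 0 T) := by
        apply ODE_solution_unique hLip2
          (hE'c.mono (Icc_subset_Ici_self)) ?_ (hEsolc.continuousOn) ?_ hE0
        · intro s hs
          have hd := (h3 s hs.1).mono (Ici_subset_Ici.2 hs.1)
          have hval : v2 s (E' s) = μ * G' s - ν * E' s := by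
            rw [hv2]
            simp only
            rw [hGeq ⟨hs.1, hs.2.le⟩]
          rw [hval]
          exact hd
        · intro s hs
          have hd := (Esol_deriv hμ hν hκ hθ hgC1 hgmono hg0 hE₀cont hE₀pos hG₀ hs.1).mono
            (Ici_subset_Ici.2 hs.1)
          exact hd
      constructor
      · intro t ht
        by_cases h0 : t ≤ 0
        · rw [h1 t ⟨ht.1, h0⟩, Esol_hist hθ t ⟨ht.1, h0⟩]
        · push_neg at h0
          have : t ≤ T := by
            have := ht.2
            push_cast at this ⊢
            linarith
          exact hEeq ⟨h0.le, this⟩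
      · intro t ht
        have : t ≤ T := by
          have := ht.2
          push_cast at this ⊢
          linarith
        exact hGeq ⟨ht.1, this⟩
  constructor
  · intro t ht
    exact (key (Nidx θ t)).1 t ⟨ht, le_Nidx hθ t⟩
  · intro t ht
    exact (key (Nidx θ t)).2 t ⟨ht, le_Nidx hθ t⟩

end DelayAux

/-- `(E, G)` is a solution on `[0,∞)` of the delayed mean-field system
`dE/dt = μG(t) - νE(t)`, `dG/dt = g(E(t-θ))(1-G(t)) - κG(t)`, with initial
history `E = E₀` on `[-θ,0]` and initial value `G(0) = G₀`. -/
def IsDelaySolution (μ ν κ θ : ℝ) (g : ℝ → ℝ) (E₀ : ℝ → ℝ) (G₀ : ℝ)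
    (E G : ℝ → ℝ) : Prop :=
  (∀ t ∈ Icc (-θ) (0 : ℝ), E t = E₀ t) ∧
  G 0 = G₀ ∧
  (∀ t ∈ Ici (0 : ℝ), HasDerivWithinAt E (μ * G t - ν * E t) (Ici 0) t) ∧
  (∀ t ∈ Ici (0 : ℝ),
    HasDerivWithinAt G (g (E (t - θ)) * (1 - G t) - κ * G t) (Ici 0) t)

/-- Lemma `existence`: existence and uniqueness of the solution
of the delayed system, together with the bounds `0 < E(t) ≤ max{E(0), μ/ν}` and
`0 < G(t) < 1` for `t > 0`. -/
theorem delay_system_existence_uniqueness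
    (μ ν κ θ : ℝ) (hμ : 0 < μ) (hν : 0 < ν) (hκ : 0 < κ) (hθ : 0 < θ)
    (g : ℝ → ℝ) (hgC1 : ContDiffOn ℝ 1 g (Ici 0)) (hgmono : MonotoneOn g (Ici 0))
    (hg0 : 0 < g 0)
    (E₀ : ℝ → ℝ) (hE₀cont : ContinuousOn E₀ (Icc (-θ) 0))
    (hE₀pos : ∀ t ∈ Icc (-θ) (0 : ℝ), 0 ≤ E₀ t)
    (G₀ : ℝ) (hG₀ : G₀ ∈ Icc (0 : ℝ) 1) :
    ∃ E G : ℝ → ℝ,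
      IsDelaySolution μ ν κ θ g E₀ G₀ E G ∧
      (∀ t : ℝ, 0 < t → 0 < E t ∧ E t ≤ max (E₀ 0) (μ / ν)) ∧
      (∀ t : ℝ, 0 < t → 0 < G t ∧ G t < 1) ∧
      (∀ E' G' : ℝ → ℝ, IsDelaySolution μ ν κ θ g E₀ G₀ E' G' →
        (∀ t : ℝ, -θ ≤ t → E' t = E t) ∧ (∀ t : ℝ, 0 ≤ t → G' t = G t)) := by
  refine ⟨DelayAux.Esol μ ν κ θ g E₀ G₀, DelayAux.Gsol μ ν κ θ g E₀ G₀, ?_, ?_, ?_, ?_⟩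
  · refine ⟨DelayAux.Esol_hist hθ, DelayAux.Gsol_zero hθ, ?_, ?_⟩
    · intro t ht
      exact DelayAux.Esol_deriv hμ hν hκ hθ hgC1 hgmono hg0 hE₀cont hE₀pos hG₀ ht
    · intro t ht
      exact DelayAux.Gsol_deriv hμ hν hκ hθ hgC1 hgmono hg0 hE₀cont hE₀pos hG₀ ht
  · intro t ht
    exact DelayAux.Esol_bounds hμ hν hκ hθ hgC1 hgmono hg0 hE₀cont hE₀pos hG₀ ht
  · intro t ht
    exact DelayAux.Gsol_bounds hμ hν hκ hθ hgC1 hgmono hg0 hE₀cont hE₀pos hG₀ ht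
  · intro E' G' hsol
    obtain ⟨h1, h2, h3, h4⟩ := hsol
    exact DelayAux.uniqueness hμ hν hκ hθ hgC1 hgmono hg0 hE₀cont hE₀pos hG₀ E' G' h1 h2 h3 h4

end
end

section
/- Let μ, ν, κ > 0 and let g : [0,∞) → ℝ be increasing with g(0) > 0 and such that x ↦ g(x)/x is decreasing on (0,∞). Then there exists a unique pair (E_0, G_0) with E_0 > 0 and 0 < G_0 < 1 satisfying the equilibrium equations 0 = μ G_0 - ν E_0 and 0 = g(E_0)(1 - G_0) - κ G_0; equivalently, E_0 ∈ (0, μ/ν) is the unique solution of (g(E)/E)(μ/ν - E) = κ, and G_0 = (ν/μ)E_0. -/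
open Set Filter Topology

noncomputable section

-- continuity lemma
lemma gcont (g : ℝ → ℝ) (hgmono : MonotoneOn g (Ici 0)) (hg0 : 0 < g 0)
    (hgdec : AntitoneOn (fun x : ℝ => g x / x) (Ioi 0)) {a : ℝ} (ha : 0 < a) :
    ContinuousAt g a := by
  have hga : 0 < g a := lt_of_lt_of_le hg0 (hgmono (mem_Ici.2 le_rfl) (mem_Ici.2 ha.le) ha.le)
  have hL : Tendsto (fun x => min (g a) (g a * x / a)) (𝓝 a) (𝓝 (g a)) := by
    have : Tendsto (fun x => min (g a) (g a * x / a)) (𝓝 a) (𝓝 (min (g a) (g a * a / a))) := by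
      exact (continuous_const.min ((continuous_const.mul continuous_id).div_const a)).tendsto a
    simpa [mul_div_assoc, div_self ha.ne', min_self] using this
  have hU : Tendsto (fun x => max (g a) (g a * x / a)) (𝓝 a) (𝓝 (g a)) := by
    have : Tendsto (fun x => max (g a) (g a * x / a)) (𝓝 a) (𝓝 (max (g a) (g a * a / a))) := by
      exact (continuous_const.max ((continuous_const.mul continuous_id).div_const a)).tendsto a
    simpa [mul_div_assoc, div_self ha.ne', max_self] using this
  have hev : ∀ᶠ x in 𝓝 a, 0 < x := eventually_gt_nhds ha
  have hlow : ∀ᶠ x in 𝓝 a, min (g a) (g a * x / a) ≤ g x := by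
    filter_upwards [hev] with x hx
    rcases le_total x a with h | h
    · refine min_le_right _ _ |>.trans ?_
      have := hgdec (mem_Ioi.2 hx) (mem_Ioi.2 ha) h
      -- g a / a ≤ g x / x
      calc g a * x / a = (g a / a) * x := by ring
        _ ≤ (g x / x) * x := by nlinarith
        _ = g x := div_mul_cancel₀ _ hx.ne'
    · exact min_le_left _ _ |>.trans (hgmono (mem_Ici.2 ha.le) (mem_Ici.2 hx.le) h)
  have hhigh : ∀ᶠ x in 𝓝 a, g x ≤ max (g a) (g a * x / a) := by
    filter_upwards [hev] with x hx
    rcases le_total x a with h | h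
    · exact (hgmono (mem_Ici.2 hx.le) (mem_Ici.2 ha.le) h).trans (le_max_left _ _)
    · refine le_trans ?_ (le_max_right _ _)
      have := hgdec (mem_Ioi.2 ha) (mem_Ioi.2 hx) h
      -- g x / x ≤ g a / a
      calc g x = (g x / x) * x := (div_mul_cancel₀ _ hx.ne').symm
        _ ≤ (g a / a) * x := by nlinarith
        _ = g a * x / a := by ring
  exact tendsto_of_tendsto_of_tendsto_of_le_of_le' hL hU hlow hhigh

/-- unique equilibrium of the delayed mean-field system.
There is a unique pair `(E₀, G₀)` with `E₀ > 0`, `0 < G₀ < 1` solving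
`0 = μG₀ - νE₀` and `0 = g(E₀)(1-G₀) - κG₀`; moreover `E₀ ∈ (0, μ/ν)` solves
`(g(E)/E)(μ/ν - E) = κ` and `G₀ = (ν/μ)E₀`. -/
theorem delay_system_unique_equilibrium
    (μ ν κ : ℝ) (hμ : 0 < μ) (hν : 0 < ν) (hκ : 0 < κ)
    (g : ℝ → ℝ) (hgmono : MonotoneOn g (Ici 0)) (hg0 : 0 < g 0)
    (hgdec : AntitoneOn (fun x : ℝ => g x / x) (Ioi 0)) :
    ∃ E₀ G₀ : ℝ,
      (0 < E₀ ∧ 0 < G₀ ∧ G₀ < 1 ∧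
        0 = μ * G₀ - ν * E₀ ∧ 0 = g E₀ * (1 - G₀) - κ * G₀) ∧
      (∀ E G : ℝ,
        (0 < E ∧ 0 < G ∧ G < 1 ∧
          0 = μ * G - ν * E ∧ 0 = g E * (1 - G) - κ * G) →
        E = E₀ ∧ G = G₀) ∧
      E₀ ∈ Ioo (0 : ℝ) (μ / ν) ∧
      (g E₀ / E₀) * (μ / ν - E₀) = κ ∧
      G₀ = (ν / μ) * E₀ ∧
      (∀ E ∈ Ioo (0 : ℝ) (μ / ν), (g E / E) * (μ / ν - E) = κ → E = E₀) := by
  set c : ℝ := μ / ν with hcdef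
  have hc : 0 < c := div_pos hμ hν
  have hgpos : ∀ x : ℝ, 0 ≤ x → 0 < g x := fun x hx =>
    lt_of_lt_of_le hg0 (hgmono (mem_Ici.2 le_rfl) (mem_Ici.2 hx) hx)
  set h : ℝ → ℝ := fun E => g E * (c - E) - κ * E with hhdef
  -- uniqueness of zero of h in Ioo 0 c
  have huniq : ∀ E E' : ℝ, E ∈ Ioo 0 c → E' ∈ Ioo 0 c → h E = 0 → h E' = 0 → E = E' := by
    have key : ∀ E E' : ℝ, E ∈ Ioo 0 c → E' ∈ Ioo 0 c → E < E' → h E = 0 → h E' = 0 → False := by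
      intro E E' hE hE' hlt hz hz'
      have hq := hgdec (mem_Ioi.2 hE.1) (mem_Ioi.2 hE'.1) hlt.le
      have hgE' : 0 < g E' := hgpos _ hE'.1.le
      have hqpos : 0 < g E' / E' := div_pos hgE' hE'.1
      have h1 : (g E' / E') * (c - E') < (g E / E) * (c - E) := by
        have : (g E' / E') * (c - E') < (g E' / E') * (c - E) := by nlinarith [hE'.2]
        refine this.trans_le ?_
        exact mul_le_mul_of_nonneg_right hq (by linarith [hE.2] : (0:ℝ) ≤ c - E)
      have e1 : (g E / E) * (c - E) = κ := by
        have hz2 : g E * (c - E) = κ * E := by simp only [hhdef] at hz; linarith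
        rw [div_mul_eq_mul_div, hz2, mul_div_assoc, div_self hE.1.ne', mul_one]
      have e2 : (g E' / E') * (c - E') = κ := by
        have hz2 : g E' * (c - E') = κ * E' := by simp only [hhdef] at hz'; linarith
        rw [div_mul_eq_mul_div, hz2, mul_div_assoc, div_self hE'.1.ne', mul_one]
      rw [e1, e2] at h1; exact lt_irrefl _ h1
    intro E E' hE hE' hz hz'
    rcases lt_trichotomy E E' with hlt | heq | hgt
    · exact absurd (key E E' hE hE' hlt hz hz') id
    · exact heq
    · exact absurd (key E' E hE' hE hgt hz' hz) id
  -- existence of a zero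
  set a : ℝ := g 0 * c / (g 0 + κ) with hadef
  have hapos : 0 < a := div_pos (mul_pos hg0 hc) (by linarith)
  have haltc : a < c := by
    rw [hadef, div_lt_iff₀ (by linarith : (0:ℝ) < g 0 + κ)]
    nlinarith
  have hha : 0 ≤ h a := by
    have hga : g 0 ≤ g a := hgmono (mem_Ici.2 le_rfl) (mem_Ici.2 hapos.le) hapos.le
    have : g 0 * (c - a) - κ * a = 0 := by
      rw [hadef]; field_simp; ring
    simp only [hhdef]
    nlinarith [haltc]
  have hhc : h c < 0 := by
    simp only [hhdef]
    nlinarith [hgpos c hc.le]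
  have hcontOn : ContinuousOn h (Icc a c) := by
    intro x hx
    have hx0 : 0 < x := lt_of_lt_of_le hapos hx.1
    exact (((gcont g hgmono hg0 hgdec hx0).mul (continuous_const.sub continuous_id).continuousAt).sub
      (continuous_const.mul continuous_id).continuousAt).continuousWithinAt
  obtain ⟨E₀, hE₀mem, hE₀⟩ : ∃ E₀ ∈ Icc a c, h E₀ = 0 := by
    have := intermediate_value_Icc' haltc.le hcontOn (by constructor <;> linarith : (0:ℝ) ∈ Icc (h c) (h a))
    obtain ⟨x, hx, hx0⟩ := this
    exact ⟨x, hx, hx0⟩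
  have hE₀pos : 0 < E₀ := lt_of_lt_of_le hapos hE₀mem.1
  have hE₀ltc : E₀ < c := lt_of_le_of_ne hE₀mem.2 (fun heq => by rw [heq] at hE₀; linarith)
  have hE₀Ioo : E₀ ∈ Ioo (0:ℝ) c := ⟨hE₀pos, hE₀ltc⟩
  set G₀ : ℝ := (ν / μ) * E₀ with hG₀def
  have hG₀eq : G₀ = E₀ / c := by rw [hG₀def, hcdef]; field_simp
  have hG₀pos : 0 < G₀ := by rw [hG₀eq]; exact div_pos hE₀pos hc
  have hG₀lt1 : G₀ < 1 := by rw [hG₀eq]; exact (div_lt_one hc).2 hE₀ltc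
  have heq2 : ∀ E G : ℝ, G = E / c → g E * (1 - G) - κ * G = (g E * (c - E) - κ * E) / c := by
    intro E G hG; rw [hG]; field_simp
  refine ⟨E₀, G₀, ⟨hE₀pos, hG₀pos, hG₀lt1, ?_, ?_⟩, ?_, hE₀Ioo, ?_, rfl, ?_⟩
  · rw [hG₀def]; field_simp; ring
  · rw [heq2 E₀ G₀ hG₀eq]
    simp only [hhdef] at hE₀
    rw [hE₀]; simp
  · rintro E G ⟨hEpos, hGpos, hG1, he1, he2⟩
    have hGE : G = E / c := by
      rw [hcdef]
      field_simp
      linarith [he1]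
    have hEltc : E < c := by
      have := (div_lt_one hc).1 (hGE ▸ hG1)
      exact this
    have hhE : h E = 0 := by
      have h3 : (g E * (c - E) - κ * E) / c = 0 := by rw [← heq2 E G hGE, ← he2]
      simp only [hhdef]
      rcases div_eq_zero_iff.1 h3 with h4 | h4
      · exact h4
      · exact absurd h4 hc.ne'
    have hEeq : E = E₀ := huniq E E₀ ⟨hEpos, hEltc⟩ hE₀Ioo hhE hE₀
    exact ⟨hEeq, by rw [hGE, hG₀eq, hEeq]⟩
  · have hz2 : g E₀ * (c - E₀) = κ * E₀ := by simp only [hhdef] at hE₀; linarith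
    rw [div_mul_eq_mul_div, hz2, mul_div_assoc, div_self hE₀pos.ne', mul_one]
  · intro E hE hEeq
    have hhE : h E = 0 := by
      simp only [hhdef]
      have h4 : g E / E * E = g E := div_mul_cancel₀ _ hE.1.ne'
      have h5 : g E * (c - E) = κ * E := by
        calc g E * (c - E) = (g E / E * E) * (c - E) := by rw [h4]
          _ = (g E / E * (c - E)) * E := by ring
          _ = κ * E := by rw [hEeq]
      linarith
    exact huniq E E₀ hE hE₀Ioo hhE hE₀

end
end

section
/- Let μ, ν, κ, θ > 0 and let g : [0,∞) → ℝ be continuously differentiable, increasing, with g(0) > 0 and x ↦ g(x)/x decreasing on (0,∞). Let (E(t), G(t)) be the solution of the delayed system dE/dt = μ G(t) - ν E(t), dG/dt = g(E(t-θ))(1-G(t)) - κ G(t), for any initial condition with E continuous and nonnegative on [-θ,0] and G(0) ∈ [0,1]. Then (E(t), G(t)) → (E_0, G_0) as t → ∞, where (E_0, G_0) is the unique equilibrium with E_0 > 0 and 0 < G_0 < 1. -/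
open Set Filter

set_option maxHeartbeats 1000000

private lemma myContOn {f f' : ℝ → ℝ} {T : ℝ}
    (hd : ∀ t ∈ Ici T, HasDerivWithinAt f (f' t) (Ici T) t) :
    ContinuousOn f (Ici T) := fun t ht => (hd t ht).continuousWithinAt

private lemma slope_le {f f' : ℝ → ℝ} {T a b m : ℝ} (hTa : T ≤ a) (hab : a ≤ b)
    (hd : ∀ t ∈ Ici T, HasDerivWithinAt f (f' t) (Ici T) t)
    (hm : ∀ t ∈ Ioo a b, f' t ≤ m) : f b ≤ f a + m * (b - a) := by
  have hsub : Icc a b ⊆ Ici T := fun x hx => le_trans hTa hx.1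
  have hanti : AntitoneOn (fun t => f t - m * t) (Icc a b) := by
    apply antitoneOn_of_hasDerivWithinAt_nonpos (convex_Icc a b)
      (f' := fun t => f' t - m)
    · exact ((myContOn hd).mono hsub).sub (continuousOn_const.mul continuousOn_id)
    · intro x hx
      rw [interior_Icc] at hx
      have h1 : HasDerivWithinAt f (f' x) (interior (Icc a b)) x :=
        ((hd x (hsub (mem_Icc_of_Ioo hx))).mono (by rw [interior_Icc]; exact (Ioo_subset_Icc_self.trans hsub)))
      have h2 : HasDerivWithinAt (fun t => m * t) m (interior (Icc a b)) x := by
        simpa using (hasDerivWithinAt_id x (interior (Icc a b))).const_mul m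
      exact h1.sub h2
    · intro x hx
      rw [interior_Icc] at hx
      have := hm x hx
      linarith
  have := hanti (left_mem_Icc.2 hab) (right_mem_Icc.2 hab) hab
  simp only at this
  linarith

private lemma barrier_Icc {f f' : ℝ → ℝ} {T T' : ℝ}
    (hd : ∀ t ∈ Ici T, HasDerivWithinAt f (f' t) (Ici T) t)
    (h0 : f T ≤ 0)
    (hbar : ∀ t, T ≤ t → t ≤ T' → 0 < f t → f' t ≤ 0) :
    ∀ t ∈ Icc T T', f t ≤ 0 := by
  intro t1 ht1
  by_contra hpos
  push_neg at hpos
  have hTt1 : T ≤ t1 := ht1.1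
  set S : Set ℝ := {s | s ∈ Icc T t1 ∧ f s ≤ 0} with hS
  have hSne : S.Nonempty := ⟨T, ⟨le_refl _, hTt1⟩, h0⟩
  have hSbdd : BddAbove S := ⟨t1, fun s hs => hs.1.2⟩
  have hSclosed : IsClosed S := by
    have : S = Icc T t1 ∩ f ⁻¹' (Iic 0) := rfl
    rw [this]
    exact ContinuousOn.preimage_isClosed_of_isClosed
      ((myContOn hd).mono (Icc_subset_Ici_self)) isClosed_Icc isClosed_Iic
  have hs0mem : sSup S ∈ S := hSclosed.csSup_mem hSne hSbdd
  set s0 := sSup S with hs0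
  have hs0t1 : s0 < t1 := lt_of_le_of_ne hs0mem.1.2 (by
    intro h; rw [h] at hs0mem; linarith [hs0mem.2])
  have hposOn : ∀ s, s0 < s → s ≤ t1 → 0 < f s := by
    intro s hs hst1
    by_contra h
    push_neg at h
    have : s ∈ S := ⟨⟨le_trans hs0mem.1.1 (le_of_lt hs), hst1⟩, h⟩
    exact absurd (le_csSup hSbdd this) (not_le.2 hs)
  -- f t1 ≤ f s for all s in (s0, t1]
  have hle : ∀ s, s0 < s → s ≤ t1 → f t1 ≤ f s := by
    intro s hs hst1
    have := slope_le (f := f) (f' := f') (T := T) (a := s) (b := t1)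
      (le_trans hs0mem.1.1 (le_of_lt hs)) hst1 hd (by
        intro x hx
        exact hbar x (le_trans hs0mem.1.1 (le_of_lt (lt_trans hs hx.1)))
          (le_trans (le_of_lt hx.2) ht1.2)
          (hposOn x (lt_trans hs hx.1) (le_of_lt hx.2)))
    linarith
  -- take limit s → s0⁺
  have hcont : Tendsto f (nhdsWithin s0 (Ioi s0)) (nhds (f s0)) := by
    have : ContinuousWithinAt f (Ici T) s0 := (myContOn hd) s0 hs0mem.1.1
    exact this.tendsto.mono_left (nhdsWithin_mono s0 (fun x hx => le_trans hs0mem.1.1 (le_of_lt hx)))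
  have hev : ∀ᶠ s in nhdsWithin s0 (Ioi s0), f t1 ≤ f s := by
    filter_upwards [Ioo_mem_nhdsGT_of_mem (Set.mem_Ico.2 ⟨le_refl s0, hs0t1⟩)] with s hs
    exact hle s hs.1 (le_of_lt hs.2)
  have : f t1 ≤ f s0 := ge_of_tendsto hcont hev
  linarith [hs0mem.2]

private lemma barrier_Ici {f f' : ℝ → ℝ} {T : ℝ}
    (hd : ∀ t ∈ Ici T, HasDerivWithinAt f (f' t) (Ici T) t)
    (h0 : f T ≤ 0)
    (hbar : ∀ t, T ≤ t → 0 < f t → f' t ≤ 0) :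
    ∀ t, T ≤ t → f t ≤ 0 := fun t ht =>
  barrier_Icc hd h0 (fun s hs hst hfs => hbar s hs hfs) t ⟨ht, le_refl t⟩

private lemma decay {f f' : ℝ → ℝ} {T a b : ℝ} (hb : 0 < b)
    (hd : ∀ t ∈ Ici T, HasDerivWithinAt f (f' t) (Ici T) t)
    (hineq : ∀ t, T ≤ t → f' t ≤ a - b * f t) :
    ∀ ε > 0, ∃ T₁, T ≤ T₁ ∧ ∀ t, T₁ ≤ t → f t ≤ a / b + ε := by
  intro ε hε
  set c := a / b + ε with hc
  have hac : a - b * c = -(b * ε) := by rw [hc, mul_add, mul_div_cancel₀ a hb.ne']; ring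
  -- step 1 : there is a time where f ≤ c
  have step1 : ∃ t1, T ≤ t1 ∧ f t1 ≤ c := by
    by_contra h
    push_neg at h
    set X := T + (f T - c) / (b * ε) + 1 with hX
    have hbε : 0 < b * ε := mul_pos hb hε
    have hfT : c < f T := h T (le_refl T)
    have hXT : T ≤ X := by
      have h0 : 0 ≤ (f T - c)/(b*ε) := div_nonneg (by linarith) (le_of_lt hbε)
      rw [hX]; linarith
    have := slope_le (m := -(b*ε)) (le_refl T) hXT hd (by
      intro x hx
      have hfx := h x (le_of_lt hx.1)
      have := hineq x (le_of_lt hx.1)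
      nlinarith)
    have hfX := h X hXT
    have hexp : f T + -(b * ε) * (X - T) = c - b * ε := by
      rw [hX]; field_simp; ring
    rw [hexp] at this
    linarith
  obtain ⟨t1, ht1T, ht1⟩ := step1
  refine ⟨t1, ht1T, ?_⟩
  have hbar := barrier_Ici (f := fun t => f t - c) (f' := f')
    (T := t1)
    (by intro t ht; exact ((hd t (le_trans ht1T ht)).mono (Ici_subset_Ici.2 ht1T)).sub_const c)
    (by simpa using ht1)
    (by intro t ht hpos
        have := hineq t (le_trans ht1T ht)
        simp only [sub_pos] at hpos
        nlinarith)
  intro t ht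
  have h2 := hbar t ht
  linarith

private lemma decay' {f f' : ℝ → ℝ} {T a b : ℝ} (hb : 0 < b)
    (hd : ∀ t ∈ Ici T, HasDerivWithinAt f (f' t) (Ici T) t)
    (hineq : ∀ t, T ≤ t → a - b * f t ≤ f' t) :
    ∀ ε > 0, ∃ T₁, T ≤ T₁ ∧ ∀ t, T₁ ≤ t → a / b - ε ≤ f t := by
  intro ε hε
  have := decay (f := fun t => -f t) (f' := fun t => -f' t) (a := -a) hb
    (fun t ht => (hd t ht).neg)
    (by intro t ht; have := hineq t ht; simp; linarith)
    ε hε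
  obtain ⟨T₁, hT₁, h⟩ := this
  refine ⟨T₁, hT₁, fun t ht => ?_⟩
  have := h t ht
  simp only [neg_div] at this
  linarith


noncomputable section

/-- Lemma `convergence`: every solution of the delayed system
converges, as `t → ∞`, to the unique equilibrium `(E₀eq, G₀eq)` with `E₀eq > 0`
and `0 < G₀eq < 1`. -/
theorem delay_system_convergence
    (μ ν κ θ : ℝ) (hμ : 0 < μ) (hν : 0 < ν) (hκ : 0 < κ) (hθ : 0 < θ)
    (g : ℝ → ℝ) (hgC1 : ContDiffOn ℝ 1 g (Ici 0)) (hgmono : MonotoneOn g (Ici 0))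
    (hg0 : 0 < g 0) (hgdec : AntitoneOn (fun x : ℝ => g x / x) (Ioi 0))
    (Eeq Geq : ℝ) (hEeq : 0 < Eeq) (hGeq : 0 < Geq ∧ Geq < 1)
    (heq1 : 0 = μ * Geq - ν * Eeq) (heq2 : 0 = g Eeq * (1 - Geq) - κ * Geq)
    (E₀ : ℝ → ℝ) (hE₀cont : ContinuousOn E₀ (Icc (-θ) 0))
    (hE₀pos : ∀ t ∈ Icc (-θ) (0 : ℝ), 0 ≤ E₀ t)
    (G₀ : ℝ) (hG₀ : G₀ ∈ Icc (0 : ℝ) 1)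
    (E G : ℝ → ℝ) (hsol : IsDelaySolution μ ν κ θ g E₀ G₀ E G) :
    Tendsto E atTop (nhds Eeq) ∧ Tendsto G atTop (nhds Geq) := by
  obtain ⟨hhist, hG0, hE', hG'⟩ := hsol
  -- ## basic positivity facts about g
  have hgpos : ∀ x, 0 ≤ x → 0 < g x :=
    fun x hx => lt_of_lt_of_le hg0 (hgmono (show (0:ℝ) ∈ Ici 0 from Set.self_mem_Ici)
      (show x ∈ Ici 0 from hx) hx)
  have hGk : ∀ x, 0 ≤ x → 0 < g x + κ := fun x hx => by linarith [hgpos x hx]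
  set Ghat : ℝ → ℝ := fun x => g x / (g x + κ) with hGhatdef
  have hGhatval : ∀ x, Ghat x = g x / (g x + κ) := fun x => rfl
  have hGhatmem : ∀ x, 0 ≤ x → 0 < Ghat x ∧ Ghat x < 1 := by
    intro x hx
    rw [hGhatval]
    constructor
    · exact div_pos (hgpos x hx) (hGk x hx)
    · rw [div_lt_one (hGk x hx)]; linarith
  have hGhatcont : ContinuousOn Ghat (Ici 0) := by
    apply (hgC1.continuousOn).div ((hgC1.continuousOn).add continuousOn_const)
    exact fun x hx => (hGk x hx).ne'
  have hGeqG : Geq = Ghat Eeq := by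
    rw [hGhatval, eq_div_iff (hGk Eeq hEeq.le).ne']
    linear_combination heq2
  have hEeqG : Eeq = μ / ν * Geq := by
    field_simp
    linarith [heq1]
  set F : ℝ → ℝ := fun x => μ / ν * Ghat x with hFdef
  have hFval : ∀ x, F x = μ / ν * Ghat x := fun x => rfl
  have hFfix : F Eeq = Eeq := by rw [hFval, ← hGeqG, ← hEeqG]
  have hFcont : ContinuousOn F (Ici 0) := continuousOn_const.mul hGhatcont
  have hFmono : MonotoneOn F (Ici 0) := by
    intro x hx y hy hxy
    rw [hFval, hFval]
    apply mul_le_mul_of_nonneg_left _ (le_of_lt (div_pos hμ hν))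
    rw [hGhatval, hGhatval, div_le_div_iff₀ (hGk x hx) (hGk y hy)]
    nlinarith [hgmono hx hy hxy]
  have hFpos : ∀ x, 0 ≤ x → 0 < F x := fun x hx =>
    mul_pos (div_pos hμ hν) (hGhatmem x hx).1
  -- ratio fact
  have hratio : ∀ x y : ℝ, 0 < x → x ≤ y → x / g x ≤ y / g y := by
    intro x y hx hxy
    have hy : 0 < y := lt_of_lt_of_le hx hxy
    have h := hgdec (mem_Ioi.mpr hx) (mem_Ioi.mpr hy) hxy
    simp only at h
    rw [div_le_div_iff₀ hy hx] at h
    rw [div_le_div_iff₀ (hgpos x hx.le) (hgpos y hy.le)]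
    nlinarith
  have hmu : μ / ν = Eeq + κ * (Eeq / g Eeq) := by
    have hgE := hgpos Eeq hEeq.le
    field_simp
    nlinarith [heq1, heq2, sq_nonneg Geq, hgE]
  have hFlt : ∀ x, Eeq < x → F x < x := by
    intro x hx
    have hx0 : 0 < x := lt_trans hEeq hx
    have h1 : Eeq / g Eeq ≤ x / g x := hratio Eeq x hEeq hx.le
    have h3 : μ / ν < x + κ * (x / g x) := by
      rw [hmu]
      nlinarith
    have hxeq : (x + κ * (x / g x)) * Ghat x = x := by
      rw [hGhatval]
      field_simp [(hgpos x hx0.le).ne', (hGk x hx0.le).ne']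
    calc F x = μ / ν * Ghat x := hFval x
    _ < (x + κ * (x / g x)) * Ghat x :=
        mul_lt_mul_of_pos_right h3 (hGhatmem x hx0.le).1
    _ = x := hxeq
  have hFgt : ∀ x, 0 ≤ x → x < Eeq → x < F x := by
    intro x hx0 hx
    rcases eq_or_lt_of_le hx0 with h|h
    · rw [← h]; exact hFpos 0 le_rfl
    · have h1 : x / g x ≤ Eeq / g Eeq := hratio x Eeq h hx.le
      have h3 : x + κ * (x / g x) < μ / ν := by
        rw [hmu]
        nlinarith
      have hxeq : (x + κ * (x / g x)) * Ghat x = x := by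
        rw [hGhatval]
        field_simp [(hgpos x h.le).ne', (hGk x h.le).ne']
      calc x = (x + κ * (x / g x)) * Ghat x := hxeq.symm
      _ < μ / ν * Ghat x := mul_lt_mul_of_pos_right h3 (hGhatmem x h.le).1
      _ = F x := (hFval x).symm

  -- ## iteration sequences
  set u : ℕ → ℝ := fun n => F^[n] (μ/ν) with hudef
  have huS : ∀ n, u (n+1) = F (u n) := fun n => Function.iterate_succ_apply' F n _
  have hu0 : u 0 = μ / ν := rfl
  have hub : ∀ n, Eeq ≤ u n := by
    intro n
    induction n with
    | zero =>
      rw [hu0, hEeqG]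
      nlinarith [hGeq.1, hGeq.2, div_pos hμ hν]
    | succ n ih =>
      rw [huS, ← hFfix]
      exact hFmono (show Eeq ∈ Ici 0 from hEeq.le)
        (show u n ∈ Ici 0 from le_trans hEeq.le ih) ih
  have hua : ∀ n, u (n+1) ≤ u n := by
    intro n
    rcases eq_or_lt_of_le (hub n) with h|h
    · rw [huS, ← h, hFfix]
    · exact le_of_lt (by rw [huS]; exact hFlt _ h)
  have huanti : Antitone u := antitone_nat_of_succ_le hua
  have hulim : Tendsto u atTop (nhds Eeq) := by
    have hbdd : BddBelow (range u) := ⟨Eeq, fun x ⟨n, hn⟩ => hn ▸ hub n⟩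
    have h1 : Tendsto u atTop (nhds (⨅ n, u n)) := tendsto_atTop_ciInf huanti hbdd
    set L := ⨅ n, u n with hL
    have hLb : Eeq ≤ L := le_ciInf hub
    have hFL : F L = L := by
      have h2 : Tendsto (fun n => u (n+1)) atTop (nhds L) :=
        h1.comp (tendsto_add_atTop_nat 1)
      have h3 : Tendsto u atTop (nhdsWithin L (Ici 0)) := by
        rw [tendsto_nhdsWithin_iff]
        exact ⟨h1, Eventually.of_forall (fun n => le_trans hEeq.le (hub n))⟩
      have h4 : Tendsto (fun n => F (u n)) atTop (nhds (F L)) :=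
        ((hFcont L (le_trans hEeq.le hLb)).tendsto).comp h3
      have h5 : (fun n => F (u n)) = fun n => u (n+1) := funext fun n => (huS n).symm
      rw [h5] at h4
      exact tendsto_nhds_unique h4 h2
    have : L = Eeq := by
      rcases eq_or_lt_of_le hLb with h|h
      · exact h.symm
      · exact absurd hFL (ne_of_lt (hFlt L h))
    rwa [this] at h1
  set l : ℕ → ℝ := fun n => F^[n] 0 with hldef
  have hlS : ∀ n, l (n+1) = F (l n) := fun n => Function.iterate_succ_apply' F n _
  have hl0 : ∀ n, 0 ≤ l n := by
    intro n
    induction n with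
    | zero => exact le_rfl
    | succ n ih => rw [hlS]; exact (hFpos _ ih).le
  have hlub : ∀ n, l n ≤ Eeq := by
    intro n
    induction n with
    | zero => exact hEeq.le
    | succ n ih =>
      rw [hlS, ← hFfix]
      exact hFmono (show l n ∈ Ici 0 from hl0 n) (show Eeq ∈ Ici 0 from hEeq.le) ih
  have hlm : ∀ n, l n ≤ l (n+1) := by
    intro n
    rcases eq_or_lt_of_le (hlub n) with h|h
    · rw [hlS, h, hFfix]
    · exact le_of_lt (by rw [hlS]; exact hFgt _ (hl0 n) h)
  have hlmono : Monotone l := monotone_nat_of_le_succ hlm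
  have hllim : Tendsto l atTop (nhds Eeq) := by
    have hbdd : BddAbove (range l) := ⟨Eeq, fun x ⟨n, hn⟩ => hn ▸ hlub n⟩
    have h1 : Tendsto l atTop (nhds (⨆ n, l n)) := tendsto_atTop_ciSup hlmono hbdd
    set M := ⨆ n, l n with hM
    have hMb : M ≤ Eeq := ciSup_le hlub
    have hM0 : 0 ≤ M := le_trans (hl0 0) (le_ciSup ⟨Eeq, fun x ⟨n, hn⟩ => hn ▸ hlub n⟩ 0)
    have hFM : F M = M := by
      have h2 : Tendsto (fun n => l (n+1)) atTop (nhds M) :=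
        h1.comp (tendsto_add_atTop_nat 1)
      have h3 : Tendsto l atTop (nhdsWithin M (Ici 0)) := by
        rw [tendsto_nhdsWithin_iff]
        exact ⟨h1, Eventually.of_forall (fun n => hl0 n)⟩
      have h4 : Tendsto (fun n => F (l n)) atTop (nhds (F M)) :=
        ((hFcont M hM0).tendsto).comp h3
      have h5 : (fun n => F (l n)) = fun n => l (n+1) := funext fun n => (hlS n).symm
      rw [h5] at h4
      exact tendsto_nhds_unique h4 h2
    have : M = Eeq := by
      rcases eq_or_lt_of_le hMb with h|h
      · exact h
      · exact absurd hFM (ne_of_gt (hFgt M hM0 h))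
    rwa [this] at h1

  -- ## invariance
  have hEhist : ∀ t, -θ ≤ t → t ≤ 0 → 0 ≤ E t := by
    intro t h1 h2
    rw [hhist t ⟨h1, h2⟩]
    exact hE₀pos t ⟨h1, h2⟩
  have inv : ∀ n : ℕ, (∀ t, -θ ≤ t → t ≤ (n:ℝ) * θ → 0 ≤ E t) ∧
      (∀ t, 0 ≤ t → t ≤ (n:ℝ) * θ → 0 ≤ G t ∧ G t ≤ 1) := by
    intro n
    induction n with
    | zero =>
      constructor
      · intro t h1 h2
        exact hEhist t h1 (by simpa using h2)
      · intro t h1 h2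
        simp only [Nat.cast_zero, zero_mul] at h2
        have ht0 : t = 0 := le_antisymm h2 h1
        rw [ht0, hG0]
        exact ⟨hG₀.1, hG₀.2⟩
    | succ n ih =>
      obtain ⟨ihE, ihG⟩ := ih
      have hnθ : (0:ℝ) ≤ (n:ℝ) * θ := by positivity
      have hcast : ((n+1 : ℕ):ℝ) * θ = (n:ℝ) * θ + θ := by push_cast; ring
      have hdel : ∀ t, (n:ℝ) * θ ≤ t → t ≤ (n:ℝ) * θ + θ → 0 ≤ E (t - θ) := by
        intro t h1 h2
        apply ihE
        · linarith
        · linarith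
      have hgdel : ∀ t, (n:ℝ) * θ ≤ t → t ≤ (n:ℝ) * θ + θ → 0 < g (E (t - θ)) :=
        fun t h1 h2 => hgpos _ (hdel t h1 h2)
      have hGn : 0 ≤ G ((n:ℝ) * θ) ∧ G ((n:ℝ) * θ) ≤ 1 := ihG _ hnθ le_rfl
      have hGlow : ∀ t, (n:ℝ) * θ ≤ t → t ≤ (n:ℝ) * θ + θ → 0 ≤ G t := by
        intro t h1 h2
        have hb := barrier_Icc (f := fun s => -G s)
          (f' := fun s => -(g (E (s - θ)) * (1 - G s) - κ * G s))
          (T := (n:ℝ) * θ) (T' := (n:ℝ) * θ + θ)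
          (fun s hs => ((hG' s (le_trans hnθ hs)).mono (Ici_subset_Ici.2 hnθ)).neg)
          (by simp only [neg_nonpos]; exact hGn.1)
          (by intro s hs1 hs2 hpos
              simp only [neg_pos] at hpos
              have hg := hgdel s hs1 hs2
              show -(g (E (s - θ)) * (1 - G s) - κ * G s) ≤ 0
              nlinarith)
          t ⟨h1, h2⟩
        simpa using hb
      have hGhigh : ∀ t, (n:ℝ) * θ ≤ t → t ≤ (n:ℝ) * θ + θ → G t ≤ 1 := by
        intro t h1 h2
        have hb := barrier_Icc (f := fun s => G s - 1)
          (f' := fun s => g (E (s - θ)) * (1 - G s) - κ * G s)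
          (T := (n:ℝ) * θ) (T' := (n:ℝ) * θ + θ)
          (fun s hs => ((hG' s (le_trans hnθ hs)).mono (Ici_subset_Ici.2 hnθ)).sub_const 1)
          (by simp only [sub_nonpos]; exact hGn.2)
          (by intro s hs1 hs2 hpos
              simp only [sub_pos] at hpos
              have hg := hgdel s hs1 hs2
              show g (E (s - θ)) * (1 - G s) - κ * G s ≤ 0
              nlinarith)
          t ⟨h1, h2⟩
        simpa [sub_nonpos] using hb
      have hGall : ∀ t, 0 ≤ t → t ≤ ((n+1:ℕ):ℝ) * θ → 0 ≤ G t ∧ G t ≤ 1 := by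
        intro t h1 h2
        rw [hcast] at h2
        rcases le_total t ((n:ℝ) * θ) with h|h
        · exact ihG t h1 h
        · exact ⟨hGlow t h h2, hGhigh t h h2⟩
      have hEn : 0 ≤ E ((n:ℝ) * θ) := ihE _ (by linarith) le_rfl
      have hElow : ∀ t, (n:ℝ) * θ ≤ t → t ≤ (n:ℝ) * θ + θ → 0 ≤ E t := by
        intro t h1 h2
        have hb := barrier_Icc (f := fun s => -E s)
          (f' := fun s => -(μ * G s - ν * E s))
          (T := (n:ℝ) * θ) (T' := (n:ℝ) * θ + θ)
          (fun s hs => ((hE' s (le_trans hnθ hs)).mono (Ici_subset_Ici.2 hnθ)).neg)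
          (by simp only [neg_nonpos]; exact hEn)
          (by intro s hs1 hs2 hpos
              simp only [neg_pos] at hpos
              have hGs : 0 ≤ G s ∧ G s ≤ 1 := hGall s (le_trans hnθ hs1) (by rw [hcast]; exact hs2)
              show -(μ * G s - ν * E s) ≤ 0
              nlinarith [hGs.1])
          t ⟨h1, h2⟩
        simpa using hb
      refine ⟨?_, hGall⟩
      intro t h1 h2
      rw [hcast] at h2
      rcases le_total t ((n:ℝ) * θ) with h|h
      · exact ihE t h1 h
      · exact hElow t h h2
  have hEpos : ∀ t, -θ ≤ t → 0 ≤ E t := by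
    intro t ht
    obtain ⟨n, hn⟩ := exists_nat_ge (t / θ)
    exact (inv n).1 t ht (by rw [div_le_iff₀ hθ] at hn; linarith)
  have hGmem : ∀ t, 0 ≤ t → 0 ≤ G t ∧ G t ≤ 1 := by
    intro t ht
    obtain ⟨n, hn⟩ := exists_nat_ge (t / θ)
    exact (inv n).2 t ht (by rw [div_le_iff₀ hθ] at hn; linarith)

  -- ## step lemmas
  have stepGup : ∀ v, 0 ≤ v → (∃ T, 0 ≤ T ∧ ∀ t, T ≤ t → E t ≤ v) →
      ∀ c, Ghat v < c → ∃ T, 0 ≤ T ∧ ∀ t, T ≤ t → G t ≤ c := by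
    rintro v hv ⟨T, hT0, hTE⟩ c hc
    have hgv := hgpos v hv
    have hd : ∀ t ∈ Ici (T + θ),
        HasDerivWithinAt G (g (E (t - θ)) * (1 - G t) - κ * G t) (Ici (T + θ)) t :=
      fun t ht => (hG' t (by simp only [mem_Ici] at ht ⊢; linarith)).mono
        (Ici_subset_Ici.2 (by linarith))
    have hineq : ∀ t, T + θ ≤ t →
        g (E (t - θ)) * (1 - G t) - κ * G t ≤ g v - (g v + κ) * G t := by
      intro t ht
      have h1 : E (t - θ) ≤ v := hTE _ (by linarith)
      have h0 : 0 ≤ E (t - θ) := hEpos _ (by linarith)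
      have hga : g (E (t - θ)) ≤ g v := hgmono (show E (t-θ) ∈ Ici 0 from h0)
        (show v ∈ Ici 0 from hv) h1
      have hG1 := hGmem t (by linarith)
      nlinarith [mul_le_mul_of_nonneg_right hga (by linarith : (0:ℝ) ≤ 1 - G t)]
    obtain ⟨T₁, hT₁, h⟩ := decay (hGk v hv) hd hineq (c - Ghat v) (by linarith)
    refine ⟨T₁, by linarith, fun t ht => ?_⟩
    have h2 := h t ht
    rw [← hGhatval] at h2
    linarith
  have stepEup : ∀ c : ℝ, (∃ T, 0 ≤ T ∧ ∀ t, T ≤ t → G t ≤ c) →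
      ∀ v, μ * c / ν < v → ∃ T, 0 ≤ T ∧ ∀ t, T ≤ t → E t ≤ v := by
    rintro c ⟨T, hT0, hTG⟩ v hv
    have hd : ∀ t ∈ Ici T, HasDerivWithinAt E (μ * G t - ν * E t) (Ici T) t :=
      fun t ht => (hE' t (le_trans hT0 ht)).mono (Ici_subset_Ici.2 hT0)
    have hineq : ∀ t, T ≤ t → μ * G t - ν * E t ≤ μ * c - ν * E t := by
      intro t ht
      have := hTG t ht
      nlinarith
    obtain ⟨T₁, hT₁, h⟩ := decay hν hd hineq (v - μ * c / ν) (by linarith)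
    exact ⟨T₁, by linarith, fun t ht => by linarith [h t ht]⟩
  have stepGdown : ∀ w, 0 ≤ w → (∃ T, 0 ≤ T ∧ ∀ t, T ≤ t → w ≤ E t) →
      ∀ c, c < Ghat w → ∃ T, 0 ≤ T ∧ ∀ t, T ≤ t → c ≤ G t := by
    rintro w hw ⟨T, hT0, hTE⟩ c hc
    have hgw := hgpos w hw
    have hd : ∀ t ∈ Ici (T + θ),
        HasDerivWithinAt G (g (E (t - θ)) * (1 - G t) - κ * G t) (Ici (T + θ)) t :=
      fun t ht => (hG' t (by simp only [mem_Ici] at ht ⊢; linarith)).mono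
        (Ici_subset_Ici.2 (by linarith))
    have hineq : ∀ t, T + θ ≤ t →
        g w - (g w + κ) * G t ≤ g (E (t - θ)) * (1 - G t) - κ * G t := by
      intro t ht
      have h1 : w ≤ E (t - θ) := hTE _ (by linarith)
      have h0 : 0 ≤ E (t - θ) := hEpos _ (by linarith)
      have hga : g w ≤ g (E (t - θ)) := hgmono (show w ∈ Ici 0 from hw)
        (show E (t-θ) ∈ Ici 0 from h0) h1
      have hG1 := hGmem t (by linarith)
      nlinarith [mul_le_mul_of_nonneg_right hga (by linarith : (0:ℝ) ≤ 1 - G t)]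
    obtain ⟨T₁, hT₁, h⟩ := decay' (hGk w hw) hd hineq (Ghat w - c) (by linarith)
    refine ⟨T₁, by linarith, fun t ht => ?_⟩
    have h2 := h t ht
    rw [← hGhatval] at h2
    linarith
  have stepEdown : ∀ c : ℝ, (∃ T, 0 ≤ T ∧ ∀ t, T ≤ t → c ≤ G t) →
      ∀ w, w < μ * c / ν → ∃ T, 0 ≤ T ∧ ∀ t, T ≤ t → w ≤ E t := by
    rintro c ⟨T, hT0, hTG⟩ w hw
    have hd : ∀ t ∈ Ici T, HasDerivWithinAt E (μ * G t - ν * E t) (Ici T) t :=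
      fun t ht => (hE' t (le_trans hT0 ht)).mono (Ici_subset_Ici.2 hT0)
    have hineq : ∀ t, T ≤ t → μ * c - ν * E t ≤ μ * G t - ν * E t := by
      intro t ht
      have := hTG t ht
      nlinarith
    obtain ⟨T₁, hT₁, h⟩ := decay' hν hd hineq (μ * c / ν - w) (by linarith)
    exact ⟨T₁, by linarith, fun t ht => by linarith [h t ht]⟩

  -- ## chains
  have chain_up : ∀ n : ℕ, ∀ v, u n < v → ∃ T, 0 ≤ T ∧ ∀ t, T ≤ t → E t ≤ v := by
    intro n
    induction n with
    | zero =>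
      intro v hv
      rw [hu0] at hv
      refine stepEup 1 ⟨0, le_rfl, fun t ht => (hGmem t ht).2⟩ v ?_
      rw [mul_one]
      exact hv
    | succ n ih =>
      intro v hv
      rw [huS, hFval] at hv
      have hun0 : 0 ≤ u n := le_trans hEeq.le (hub n)
      rw [div_mul_eq_mul_div] at hv
      have hv2 := (div_lt_iff₀ hν).1 hv
      have h1 : Ghat (u n) < ν * v / μ := by
        rw [lt_div_iff₀ hμ]
        linarith
      set c := (Ghat (u n) + ν * v / μ) / 2 with hcdef
      have hc1 : Ghat (u n) < c := by rw [hcdef]; linarith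
      have hc1' : c < ν * v / μ := by rw [hcdef]; linarith
      have hc2 : μ * c / ν < v := by
        rw [div_lt_iff₀ hν]
        rw [lt_div_iff₀ hμ] at hc1'
        nlinarith
      have hcw : ContinuousWithinAt Ghat (Ici 0) (u n) := hGhatcont _ hun0
      have hmem : Ghat ⁻¹' (Iio c) ∈ nhdsWithin (u n) (Ici 0) := hcw (Iio_mem_nhds hc1)
      rw [Metric.mem_nhdsWithin_iff] at hmem
      obtain ⟨ε, hε, hball⟩ := hmem
      set v₀ := u n + ε / 2 with hv₀def
      have hv₀mem : v₀ ∈ Metric.ball (u n) ε ∩ Ici 0 := by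
        constructor
        · rw [Metric.mem_ball, Real.dist_eq, hv₀def,
            show u n + ε/2 - u n = ε/2 by ring, abs_of_pos (by linarith)]
          linarith
        · show (0:ℝ) ≤ v₀
          rw [hv₀def]; linarith
      have hGv₀ : Ghat v₀ < c := hball hv₀mem
      have hEv₀ := ih v₀ (by rw [hv₀def]; linarith)
      exact stepEup c (stepGup v₀ hv₀mem.2 hEv₀ c hGv₀) v hc2
  have chain_down : ∀ n : ℕ, ∀ w : ℝ, w < l n ∨ w ≤ 0 →
      ∃ T, 0 ≤ T ∧ ∀ t, T ≤ t → w ≤ E t := by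
    intro n
    induction n with
    | zero =>
      intro w hw
      have hw0 : w ≤ 0 := by
        rcases hw with h|h
        · exact le_of_lt h
        · exact h
      exact ⟨0, le_rfl, fun t ht => le_trans hw0 (hEpos t (by linarith))⟩
    | succ n ih =>
      intro w hw
      rcases le_or_gt w 0 with h0|h0
      · exact ⟨0, le_rfl, fun t ht => le_trans h0 (hEpos t (by linarith))⟩
      have hwF : w < F (l n) := by
        rcases hw with h|h
        · rwa [hlS] at h
        · linarith
      rw [hFval] at hwF
      rw [div_mul_eq_mul_div] at hwF
      have hwF2 := (lt_div_iff₀ hν).1 hwF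
      have h1 : ν * w / μ < Ghat (l n) := by
        rw [div_lt_iff₀ hμ]
        linarith
      set c := (ν * w / μ + Ghat (l n)) / 2 with hcdef
      have hc1 : c < Ghat (l n) := by rw [hcdef]; linarith
      have hc1' : ν * w / μ < c := by rw [hcdef]; linarith
      have hc2 : w < μ * c / ν := by
        rw [lt_div_iff₀ hν]
        rw [div_lt_iff₀ hμ] at hc1'
        nlinarith
      have hcw : ContinuousWithinAt Ghat (Ici 0) (l n) := hGhatcont _ (hl0 n)
      have hmem : Ghat ⁻¹' (Ioi c) ∈ nhdsWithin (l n) (Ici 0) := hcw (Ioi_mem_nhds hc1)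
      rw [Metric.mem_nhdsWithin_iff] at hmem
      obtain ⟨ε, hε, hball⟩ := hmem
      set w₀ := max (l n - ε / 2) 0 with hw₀def
      have hw₀0 : 0 ≤ w₀ := le_max_right _ _
      have hw₀le : w₀ ≤ l n := by
        rw [hw₀def]
        exact max_le (by linarith) (hl0 n)
      have hw₀ge : l n - ε / 2 ≤ w₀ := le_max_left _ _
      have hw₀mem : w₀ ∈ Metric.ball (l n) ε ∩ Ici 0 := by
        constructor
        · rw [Metric.mem_ball, Real.dist_eq, abs_of_nonpos (by linarith)]
          linarith
        · exact hw₀0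
      have hGw₀ : c < Ghat w₀ := hball hw₀mem
      have hEw₀ : ∃ T, 0 ≤ T ∧ ∀ t, T ≤ t → w₀ ≤ E t := by
        rcases lt_or_ge w₀ (l n) with h|h
        · exact ih w₀ (Or.inl h)
        · have : w₀ = l n := le_antisymm hw₀le h
          have hln0 : l n ≤ 0 := by
            by_contra hc
            push_neg at hc
            have : w₀ < l n := by
              rw [hw₀def]
              apply max_lt (by linarith) hc
            linarith
          exact ⟨0, le_rfl, fun t ht => by
            have := hEpos t (by linarith)
            linarith [hw₀le, hln0]⟩
      exact stepEdown c (stepGdown w₀ hw₀0 hEw₀ c hGw₀) w hc2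

  -- ## conclusion
  constructor
  · rw [tendsto_order]
    constructor
    · intro b hb
      have hw1 : b < (b + Eeq)/2 := by linarith
      have hw2 : (b + Eeq)/2 < Eeq := by linarith
      obtain ⟨n, hn⟩ := (hllim.eventually (eventually_gt_nhds hw2)).exists
      obtain ⟨T, hT0, hT⟩ := chain_down n ((b + Eeq)/2) (Or.inl hn)
      rw [eventually_atTop]
      exact ⟨T, fun t ht => lt_of_lt_of_le hw1 (hT t ht)⟩
    · intro b hb
      have hv1 : Eeq < (Eeq + b)/2 := by linarith
      have hv2 : (Eeq + b)/2 < b := by linarith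
      obtain ⟨n, hn⟩ := (hulim.eventually (eventually_lt_nhds hv1)).exists
      obtain ⟨T, hT0, hT⟩ := chain_up n ((Eeq + b)/2) hn
      rw [eventually_atTop]
      exact ⟨T, fun t ht => lt_of_le_of_lt (hT t ht) hv2⟩
  · rw [tendsto_order]
    constructor
    · intro b hb
      set c := (b + Geq)/2 with hcdef
      have hcb : b < c := by rw [hcdef]; linarith
      have hcG : c < Ghat Eeq := by rw [← hGeqG, hcdef]; linarith
      have hcw : ContinuousWithinAt Ghat (Ici 0) Eeq := hGhatcont _ hEeq.le
      have hmem : Ghat ⁻¹' (Ioi c) ∈ nhdsWithin Eeq (Ici 0) := hcw (Ioi_mem_nhds hcG)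
      rw [Metric.mem_nhdsWithin_iff] at hmem
      obtain ⟨ε, hε, hball⟩ := hmem
      set w₀ := max (Eeq - ε/2) 0 with hw₀def
      have hw₀0 : (0:ℝ) ≤ w₀ := le_max_right _ _
      have hw₀lt : w₀ < Eeq := by rw [hw₀def]; exact max_lt (by linarith) hEeq
      have hw₀ge : Eeq - ε/2 ≤ w₀ := le_max_left _ _
      have hw₀mem : w₀ ∈ Metric.ball Eeq ε ∩ Ici 0 := by
        constructor
        · rw [Metric.mem_ball, Real.dist_eq, abs_of_nonpos (by linarith [hw₀lt])]
          linarith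
        · exact hw₀0
      have hGw₀ : c < Ghat w₀ := hball hw₀mem
      obtain ⟨n, hn⟩ := (hllim.eventually (eventually_gt_nhds hw₀lt)).exists
      have hEw₀ := chain_down n w₀ (Or.inl hn)
      obtain ⟨T, hT0, hT⟩ := stepGdown w₀ hw₀0 hEw₀ c hGw₀
      rw [eventually_atTop]
      exact ⟨T, fun t ht => lt_of_lt_of_le hcb (hT t ht)⟩
    · intro b hb
      set c := (Geq + b)/2 with hcdef
      have hcb : c < b := by rw [hcdef]; linarith
      have hcG : Ghat Eeq < c := by rw [← hGeqG, hcdef]; linarith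
      have hcw : ContinuousWithinAt Ghat (Ici 0) Eeq := hGhatcont _ hEeq.le
      have hmem : Ghat ⁻¹' (Iio c) ∈ nhdsWithin Eeq (Ici 0) := hcw (Iio_mem_nhds hcG)
      rw [Metric.mem_nhdsWithin_iff] at hmem
      obtain ⟨ε, hε, hball⟩ := hmem
      set v₀ := Eeq + ε/2 with hv₀def
      have hv₀gt : Eeq < v₀ := by rw [hv₀def]; linarith
      have hv₀mem : v₀ ∈ Metric.ball Eeq ε ∩ Ici 0 := by
        constructor
        · rw [Metric.mem_ball, Real.dist_eq, hv₀def,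
            show Eeq + ε/2 - Eeq = ε/2 by ring, abs_of_pos (by linarith)]
          linarith
        · show (0:ℝ) ≤ v₀
          rw [hv₀def]; linarith
      have hGv₀ : Ghat v₀ < c := hball hv₀mem
      obtain ⟨n, hn⟩ := (hulim.eventually (eventually_lt_nhds hv₀gt)).exists
      have hEv₀ := chain_up n v₀ hn
      obtain ⟨T, hT0, hT⟩ := stepGup v₀ hv₀mem.2 hEv₀ c hGv₀
      rw [eventually_atTop]
      exact ⟨T, fun t ht => lt_of_le_of_lt (hT t ht) hcb⟩

end
end
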